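/- arXiv:1910.12059 — 12 statements merged into one kernel-verified Lean document; each statement's English description precedes it below -/
import Mathlib

section
/- Let B be a fusion algebra with ℝ_{≥0}-basis {x_1 = 1, ..., x_m} and structure constants N_{j,k}^s ≥ 0 satisfying N_{j,k}^1 = δ_{j,k^*}. Let d(x_j) denote the operator norm of the left-multiplication matrix L_j with entries (L_j)_{k,s} = N_{j,k}^s. Then d(x_j) d(x_k) = Σ_s N_{j,k}^s d(x_s), d(x_j) = d(x_{j^*}), and d(x_j) ≥ 1 for all j. -/
/-!
Right multiplication by `x_1 + ⋯ + x_m` has a symmetric matrix `Q` (Frobenius reciprocity) with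
positive entries (`x_a x_b ≠ 0` since `x_a x_b x_{b^*}` contains `x_a`), so `Q` has an eigenvector
`u > 0`, and every nonnegative eigenvector for the same eigenvalue is a multiple of `u`. Each `L_j`
commutes with `Q` by associativity, hence `L_j u = c_j u` with `c_j ≥ 0`, and `j ↦ c_j` is
multiplicative. As `L_jᵀ = L_{j^*}`, also `c_{j^*} = c_j`, so the Schur test with the weight `u`
gives `‖L_j‖ = c_j`. Finally `c_j ^ 2 = c_j c_{j^*} ≥ N_{j^*,j}^1 c_1 = 1`.
-/

/-- The Frobenius–Perron dimension of the `j`-th basis element of a fusion algebra: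
the operator norm of the left-multiplication matrix `L_j` with entries
`(L_j)_{k,s} = N_{j,k}^s`. -/
noncomputable def fusionDim (m : ℕ) (N : Fin m → Fin m → Fin m → ℝ) (j : Fin m) : ℝ :=
  ‖LinearMap.toContinuousLinearMap
      (Matrix.toEuclideanLin (Matrix.of fun k s => N j k s))‖

open Finset

namespace Matrix

variable {m n : Type*} [Fintype n]

theorem mulVec_apply_pos {Q : Matrix m n ℝ} (hQ : ∀ a b, 0 < Q a b) {v : n → ℝ}
    (hv : 0 ≤ v) (hv0 : v ≠ 0) (a : m) : 0 < (Q *ᵥ v) a := by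
  obtain ⟨b, hb⟩ := Function.ne_iff.mp hv0
  exact sum_pos' (fun i _ => mul_nonneg (hQ a i).le (hv i))
    ⟨b, mem_univ b, mul_pos (hQ a b) ((hv b).lt_of_ne' hb)⟩

theorem pos_of_nonneg_eigenvector {Q : Matrix n n ℝ} (hQ : ∀ a b, 0 < Q a b) {r : ℝ}
    {v : n → ℝ} (hv : 0 ≤ v) (hv0 : v ≠ 0) (hQv : Q *ᵥ v = r • v) (a : n) : 0 < v a := by
  have h := mulVec_apply_pos hQ hv hv0 a
  rw [hQv, Pi.smul_apply, smul_eq_mul] at h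
  exact (hv a).lt_of_ne' fun h0 => by simp [h0] at h

theorem exists_smul_eq_of_nonneg_eigenvector [Nonempty n] {Q : Matrix n n ℝ}
    (hQ : ∀ a b, 0 < Q a b) {r : ℝ} {u w : n → ℝ} (hu : ∀ a, 0 < u a)
    (hQu : Q *ᵥ u = r • u) (hw : 0 ≤ w) (hQw : Q *ᵥ w = r • w) : ∃ t : ℝ, 0 ≤ t ∧ w = t • u := by
  obtain ⟨a₀, -, hmin⟩ := exists_min_image univ (fun a => w a / u a) univ_nonempty
  set t := w a₀ / u a₀
  have hv : 0 ≤ w - t • u := fun a => by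
    simpa [le_div_iff₀ (hu a)] using hmin a (mem_univ a)
  have hva₀ : (w - t • u) a₀ = 0 := by simp [t, div_mul_cancel₀ _ (hu a₀).ne']
  have hQv : Q *ᵥ (w - t • u) = r • (w - t • u) := by
    rw [mulVec_sub, mulVec_smul, hQu, hQw, smul_sub, smul_comm]
  have hv0 : w - t • u = 0 := by
    by_contra hne
    exact (pos_of_nonneg_eigenvector hQ hv hne hQv a₀).ne' hva₀
  exact ⟨t, div_nonneg (hw a₀) (hu a₀).le, sub_eq_zero.mp hv0⟩

theorem exists_pos_eigenvector_of_isSymm [DecidableEq n] [Nonempty n] {Q : Matrix n n ℝ}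
    (hQs : Q.IsSymm) (hQ : ∀ a b, 0 < Q a b) :
    ∃ (r : ℝ) (u : n → ℝ), (∀ a, 0 < u a) ∧ Q *ᵥ u = r • u := by
  set T := LinearMap.toContinuousLinearMap (toEuclideanLin Q)
  have hT : IsSelfAdjoint T := by
    rw [ContinuousLinearMap.isSelfAdjoint_iff_isSymmetric]
    exact isSymmetric_toEuclideanLin_iff.mpr (isHermitian_iff_isSymm.mpr hQs)
  have hquad : ∀ x : EuclideanSpace ℝ n,
      T.reApplyInnerSelf x = ∑ a, ∑ b, Q a b * x a * x b := by
    intro x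
    change ∑ a, x a * (Q *ᵥ x) a = _
    simp only [mulVec, dotProduct, mul_sum]
    exact sum_congr rfl fun a _ => sum_congr rfl fun b _ => by ring
  -- Replacing a maximiser `x` of the quadratic form on the unit sphere by `|x|` keeps it a
  -- maximiser, since `Q` has positive entries.
  obtain ⟨x, hx, hmax⟩ := (isCompact_sphere (0 : EuclideanSpace ℝ n) 1).exists_isMaxOn
    (NormedSpace.sphere_nonempty.mpr zero_le_one) T.reApplyInnerSelf_continuous.continuousOn
  set v : EuclideanSpace ℝ n := WithLp.toLp 2 fun a => |x a|
  have hv_norm : ‖v‖ = 1 := by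
    simpa [v, EuclideanSpace.norm_eq] using hx
  have hv_max : IsMaxOn T.reApplyInnerSelf (Metric.sphere 0 ‖v‖) v := by
    intro y hy
    have hy_le : T.reApplyInnerSelf y ≤ T.reApplyInnerSelf x := hmax (hv_norm ▸ hy)
    refine hy_le.trans ?_
    simp only [hquad]
    refine sum_le_sum fun a _ => sum_le_sum fun b _ => (le_abs_self _).trans_eq ?_
    simp [v, abs_mul, abs_of_pos (hQ a b)]
  obtain ⟨hv_eig, hv0⟩ :=
    hT.hasEigenvector_of_isMaxOn (norm_ne_zero_iff.mp (by simp [hv_norm])) hv_max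
  have hQv : Q *ᵥ v.ofLp = _ • v.ofLp :=
    congrArg WithLp.ofLp (Module.End.mem_eigenspace_iff.mp hv_eig)
  refine ⟨_, v.ofLp, pos_of_nonneg_eigenvector hQ (fun a => abs_nonneg (x a)) ?_ hQv, hQv⟩
  exact fun h => hv0 (by ext a; simpa using congrFun h a)

theorem sum_sq_mulVec_le [Fintype m] {A : Matrix m n ℝ} (hA : ∀ a b, 0 ≤ A a b) {u : m → ℝ}
    {v : n → ℝ} (hv : ∀ b, 0 < v b) {α β : ℝ} (hAv : A *ᵥ v = α • u) (hAu : Aᵀ *ᵥ u = β • v)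
    (w : n → ℝ) : ∑ a, (A *ᵥ w) a ^ 2 ≤ α * β * ∑ b, w b ^ 2 := by
  have hrow : ∀ a, (A *ᵥ w) a ^ 2 ≤ α * u a * ∑ b, A a b * (w b ^ 2 / v b) := by
    intro a
    have hAv_a : ∑ b, A a b * v b = α * u a := congrFun hAv a
    rw [← hAv_a]
    -- Cauchy–Schwarz for `A a b * w b = √(A a b * v b) * √(A a b * w b ^ 2 / v b)`.
    refine sum_sq_le_sum_mul_sum_of_sq_le_mul univ
      (fun b _ => mul_nonneg (hA a b) (hv b).le)
      (fun b _ => mul_nonneg (hA a b) (div_nonneg (sq_nonneg _) (hv b).le))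
      (fun b _ => le_of_eq ?_)
    field_simp [(hv b).ne']
  have hcol : ∀ b, ∑ a, A a b * u a = β * v b := fun b => congrFun hAu b
  calc ∑ a, (A *ᵥ w) a ^ 2 ≤ ∑ a, α * u a * ∑ b, A a b * (w b ^ 2 / v b) :=
        sum_le_sum fun a _ => hrow a
    _ = α * ∑ b, (∑ a, A a b * u a) * (w b ^ 2 / v b) := by
        simp only [mul_sum, sum_mul]
        rw [sum_comm]
        exact sum_congr rfl fun b _ => sum_congr rfl fun a _ => by ring
    _ = α * β * ∑ b, w b ^ 2 := by
        simp only [hcol, mul_sum]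
        exact sum_congr rfl fun b _ => by field_simp [(hv b).ne']

theorem norm_toEuclideanLin_eq_of_pos_eigenvector [DecidableEq n] [Nonempty n]
    {A : Matrix n n ℝ} (hA : ∀ a b, 0 ≤ A a b) {u : n → ℝ} (hu : ∀ a, 0 < u a) {c : ℝ} (hc : 0 ≤ c)
    (hAu : A *ᵥ u = c • u) (hAtu : Aᵀ *ᵥ u = c • u) :
    ‖LinearMap.toContinuousLinearMap (toEuclideanLin A)‖ = c := by
  set T := LinearMap.toContinuousLinearMap (toEuclideanLin A)
  refine le_antisymm (T.opNorm_le_bound hc fun w => ?_) ?_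
  · refine le_of_sq_le_sq ?_ (by positivity)
    simpa [EuclideanSpace.norm_sq_eq, mul_pow, sq c, T, toLpLin_apply] using
      sum_sq_mulVec_le hA hu hAu hAtu w.ofLp
  · have hTu : T (WithLp.toLp 2 u) = c • WithLp.toLp 2 u := congrArg (WithLp.toLp 2) hAu
    have hu0 : 0 < ‖WithLp.toLp 2 u‖ := by
      obtain ⟨a⟩ := ‹Nonempty n›
      exact norm_pos_iff.mpr fun h => (hu a).ne' (by simpa using congrArg (· a) h)
    refine le_of_mul_le_mul_right ?_ hu0
    simpa [hTu, norm_smul, abs_of_nonneg hc] using T.le_opNorm (WithLp.toLp 2 u)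

end Matrix

namespace FusionAlgebra

open Matrix

variable {ι : Type*} {N : ι → ι → ι → ℝ} {σ : ι → ι}

def leftMul (N : ι → ι → ι → ℝ) (j : ι) : Matrix ι ι ℝ := of fun k s => N j k s

theorem leftMul_transpose (hfrob : ∀ j k s, N j k s = N (σ j) s k) (j : ι) :
    (leftMul N j)ᵀ = leftMul N (σ j) := by
  ext k s
  exact hfrob j s k

variable [Fintype ι]

/-- Right multiplication by `∑ l, x_l`, in the same convention as `leftMul`. -/
def rightMulSum (N : ι → ι → ι → ℝ) : Matrix ι ι ℝ := of fun j s => ∑ l, N j l s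

theorem leftMul_mul_leftMul
    (hassoc : ∀ j k l s, ∑ t, N j k t * N t l s = ∑ t, N k l t * N j t s) (j k : ι) :
    leftMul N j * leftMul N k = ∑ r, N k j r • leftMul N r := by
  ext a t
  simp only [leftMul, mul_apply, Matrix.sum_apply, Matrix.smul_apply, of_apply, smul_eq_mul]
  exact (hassoc k j a t).symm

theorem leftMul_commute_rightMulSum
    (hassoc : ∀ j k l s, ∑ t, N j k t * N t l s = ∑ t, N k l t * N j t s) (j : ι) :
    Commute (leftMul N j) (rightMulSum N) := by
  ext k s
  simp only [mul_apply, leftMul, rightMulSum, of_apply, mul_sum, sum_mul]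
  rw [sum_comm]
  refine (sum_congr rfl fun l _ => hassoc j k l s).trans ?_
  rw [sum_comm]

theorem rightMulSum_isSymm (hσ : ∀ j, σ (σ j) = j) (hfrob : ∀ j k s, N j k s = N (σ j) s k)
    (hfrob' : ∀ j k s, N j k s = N (σ k) (σ j) (σ s)) : (rightMulSum N).IsSymm := by
  have hreciprocity : ∀ j k s, N s k j = N j (σ k) s := fun j k s => by
    rw [hfrob s k j, hfrob' (σ s) j k, hσ, hfrob j (σ k) s]
  ext j s
  simp only [transpose_apply, rightMulSum, of_apply, hreciprocity s]
  exact (Equiv.sum_comp (Function.Involutive.toPerm σ hσ) fun l => N s l j).symm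

theorem sum_structConst_pos (e : ι) [DecidableEq ι] (hN : ∀ j k s, 0 ≤ N j k s)
    (hσ : ∀ j, σ (σ j) = j) (hunit' : ∀ j s, N j e s = if j = s then 1 else 0)
    (hdual : ∀ j k, N j k e = if j = σ k then 1 else 0)
    (hassoc : ∀ j k l s, ∑ t, N j k t * N t l s = ∑ t, N k l t * N j t s) (a b : ι) :
    0 < ∑ l, N a b l := by
  refine (sum_nonneg fun l _ => hN a b l).lt_of_ne fun h => ?_
  have hzero : ∀ t, N a b t = 0 := fun t =>
    (sum_eq_zero_iff_of_nonneg fun l _ => hN a b l).mp h.symm t (mem_univ t)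
  have key := hassoc a b (σ b) a
  simp only [hzero, zero_mul, sum_const_zero] at key
  have hle : N b (σ b) e * N a e a ≤ ∑ t, N b (σ b) t * N a t a :=
    single_le_sum (fun t _ => mul_nonneg (hN b (σ b) t) (hN a t a)) (mem_univ e)
  norm_num [hunit', hdual, hσ, ← key] at hle

theorem rightMulSum_pos (e : ι) [DecidableEq ι] (hN : ∀ j k s, 0 ≤ N j k s)
    (hσ : ∀ j, σ (σ j) = j) (hunit' : ∀ j s, N j e s = if j = s then 1 else 0)
    (hdual : ∀ j k, N j k e = if j = σ k then 1 else 0)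
    (hassoc : ∀ j k l s, ∑ t, N j k t * N t l s = ∑ t, N k l t * N j t s)
    (hfrob : ∀ j k s, N j k s = N (σ j) s k) (j s : ι) : 0 < rightMulSum N j s :=
  (sum_structConst_pos e hN hσ hunit' hdual hassoc (σ j) s).trans_eq
    (sum_congr rfl fun l _ => (hfrob j l s).symm)

theorem exists_pos_eigenvector_leftMul (e : ι) [DecidableEq ι] (hN : ∀ j k s, 0 ≤ N j k s)
    (hσ : ∀ j, σ (σ j) = j) (hunit' : ∀ j s, N j e s = if j = s then 1 else 0)
    (hdual : ∀ j k, N j k e = if j = σ k then 1 else 0)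
    (hassoc : ∀ j k l s, ∑ t, N j k t * N t l s = ∑ t, N k l t * N j t s)
    (hfrob : ∀ j k s, N j k s = N (σ j) s k)
    (hfrob' : ∀ j k s, N j k s = N (σ k) (σ j) (σ s)) :
    ∃ u : ι → ℝ, (∀ a, 0 < u a) ∧
      ∃ c : ι → ℝ, (∀ j, 0 ≤ c j) ∧ ∀ j, leftMul N j *ᵥ u = c j • u := by
  have : Nonempty ι := ⟨e⟩
  have hQ := rightMulSum_pos e hN hσ hunit' hdual hassoc hfrob
  obtain ⟨r, u, hu, hQu⟩ :=
    exists_pos_eigenvector_of_isSymm (rightMulSum_isSymm hσ hfrob hfrob') hQ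
  have hLu : ∀ j, ∃ c : ℝ, 0 ≤ c ∧ leftMul N j *ᵥ u = c • u := by
    intro j
    refine exists_smul_eq_of_nonneg_eigenvector hQ hu hQu (fun a => ?_) ?_
    · exact sum_nonneg fun b _ => mul_nonneg (hN j a b) (hu b).le
    · rw [mulVec_mulVec, ← (leftMul_commute_rightMulSum hassoc j).eq, ← mulVec_mulVec, hQu,
        mulVec_smul]
  choose c hc0 hc using hLu
  exact ⟨u, hu, c, hc0, hc⟩

variable {u c : ι → ℝ}

theorem eigenvalue_mul_eigenvalue
    (hassoc : ∀ j k l s, ∑ t, N j k t * N t l s = ∑ t, N k l t * N j t s) (hu : u ≠ 0)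
    (hc : ∀ j, leftMul N j *ᵥ u = c j • u) (j k : ι) : c j * c k = ∑ r, N k j r * c r := by
  refine smul_left_injective ℝ hu ?_
  calc (c j * c k) • u = leftMul N j *ᵥ (leftMul N k *ᵥ u) := by
        rw [hc k, mulVec_smul, hc j, smul_smul, mul_comm]
    _ = ∑ r, N k j r • (leftMul N r *ᵥ u) := by
        rw [mulVec_mulVec, leftMul_mul_leftMul hassoc, sum_mulVec]
        simp only [smul_mulVec]
    _ = (∑ r, N k j r * c r) • u := by
        simp only [hc, smul_smul, sum_smul]

theorem eigenvalue_dual (hfrob : ∀ j k s, N j k s = N (σ j) s k) (hu : u ≠ 0)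
    (hc : ∀ j, leftMul N j *ᵥ u = c j • u) (j : ι) : c (σ j) = c j := by
  have h := dotProduct_mulVec u (leftMul N j) u
  rw [← mulVec_transpose, leftMul_transpose hfrob, hc, hc, dotProduct_smul, smul_dotProduct,
    smul_eq_mul, smul_eq_mul] at h
  exact mul_right_cancel₀ (dotProduct_self_eq_zero.not.mpr hu) h.symm

theorem eigenvalue_unit (e : ι) [DecidableEq ι]
    (hunit : ∀ k s, N e k s = if k = s then 1 else 0) (hu : u ≠ 0)
    (hc : ∀ j, leftMul N j *ᵥ u = c j • u) : c e = 1 := by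
  have hL : leftMul N e = 1 := by
    ext k s
    simp [leftMul, hunit, one_apply]
  refine smul_left_injective ℝ hu ?_
  simp [← hc e, hL]

theorem one_le_eigenvalue (e : ι) [DecidableEq ι] (hN : ∀ j k s, 0 ≤ N j k s)
    (hunit : ∀ k s, N e k s = if k = s then 1 else 0)
    (hdual : ∀ j k, N j k e = if j = σ k then 1 else 0)
    (hassoc : ∀ j k l s, ∑ t, N j k t * N t l s = ∑ t, N k l t * N j t s)
    (hfrob : ∀ j k s, N j k s = N (σ j) s k) (hu : u ≠ 0)
    (hc0 : ∀ j, 0 ≤ c j) (hc : ∀ j, leftMul N j *ᵥ u = c j • u) (j : ι) : 1 ≤ c j := by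
  have hsq := eigenvalue_mul_eigenvalue hassoc hu hc j (σ j)
  rw [eigenvalue_dual hfrob hu hc] at hsq
  have hle : N (σ j) j e * c e ≤ ∑ r, N (σ j) j r * c r :=
    single_le_sum (fun r _ => mul_nonneg (hN (σ j) j r) (hc0 r)) (mem_univ e)
  rw [hdual, if_pos rfl, eigenvalue_unit e hunit hu hc, ← hsq] at hle
  nlinarith [hc0 j]

end FusionAlgebra

open FusionAlgebra in
/-- For a fusion algebra, the operator norms `d(x_j) = ‖L_j‖` satisfy
`d(x_j) d(x_k) = Σ_s N_{j,k}^s d(x_s)`, `d(x_j) = d(x_{j^*})`, and `d(x_j) ≥ 1`. -/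
theorem fusionDim_multiplicative_symmetric_ge_one
    (m : ℕ) (hm : 0 < m)
    (N : Fin m → Fin m → Fin m → ℝ)
    (hN : ∀ j k s, 0 ≤ N j k s)
    (σ : Fin m → Fin m) (hσ : ∀ j, σ (σ j) = j)
    (hunit : ∀ k s, N ⟨0, hm⟩ k s = if k = s then 1 else 0)
    (hunit' : ∀ j s, N j ⟨0, hm⟩ s = if j = s then 1 else 0)
    (hdual : ∀ j k, N j k ⟨0, hm⟩ = if j = σ k then 1 else 0)
    (hassoc : ∀ j k l s, ∑ t, N j k t * N t l s = ∑ t, N k l t * N j t s)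
    (hfrob : ∀ j k s, N j k s = N (σ j) s k)
    (hfrob' : ∀ j k s, N j k s = N (σ k) (σ j) (σ s)) :
    (∀ j k, fusionDim m N j * fusionDim m N k = ∑ s, N j k s * fusionDim m N s) ∧
    (∀ j, fusionDim m N j = fusionDim m N (σ j)) ∧
    (∀ j, 1 ≤ fusionDim m N j) := by
  have : Nonempty (Fin m) := ⟨⟨0, hm⟩⟩
  obtain ⟨u, hu, c, hc0, hc⟩ :=
    exists_pos_eigenvector_leftMul ⟨0, hm⟩ hN hσ hunit' hdual hassoc hfrob hfrob'
  have hu0 : u ≠ 0 := fun h => (hu ⟨0, hm⟩).ne' (congrFun h _)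
  have hdim : ∀ j, fusionDim m N j = c j := fun j =>
    Matrix.norm_toEuclideanLin_eq_of_pos_eigenvector (A := leftMul N j) (hN j) hu (hc0 j) (hc j)
      (by rw [leftMul_transpose hfrob, hc, eigenvalue_dual hfrob hu0 hc])
  simp only [hdim]
  refine ⟨fun j k => ?_, fun j => (eigenvalue_dual hfrob hu0 hc j).symm,
    one_le_eigenvalue ⟨0, hm⟩ hN hunit hdual hassoc hfrob hu0 hc0 hc⟩
  rw [mul_comm]
  exact eigenvalue_mul_eigenvalue hassoc hu0 hc k j
end

section
/- Let A be a square matrix with nonnegative real entries. If A has an eigenvector f with strictly positive entries, then the corresponding eigenvalue equals the spectral radius (the largest nonnegative eigenvalue) of A. -/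
/-!
Let `v` be a complex eigenvector of `A` for an eigenvalue `z`, and let `i₀` maximise the ratio
`‖v i‖ / f i`, so that `‖v‖ ≤ c f` entrywise with equality at `i₀`. Since `A` is nonnegative,
`‖z‖ ‖v i₀‖ ≤ (A ‖v‖) i₀ ≤ c (A f) i₀ = μ ‖v i₀‖`, hence `‖z‖ ≤ μ`; and `μ` itself is an
eigenvalue, with eigenvector `f`.
-/

open Matrix Module End

theorem Matrix.mem_spectrum_iff_exists_mulVec_eq_smul {K ι : Type*} [Field K] [Fintype ι]
    [DecidableEq ι] (M : Matrix ι ι K) (z : K) :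
    z ∈ spectrum K M ↔ ∃ v ≠ 0, M *ᵥ v = z • v := by
  rw [← spectrum_toLin', ← hasEigenvalue_iff_mem_spectrum, hasEigenvalue_iff]
  simp only [Submodule.ne_bot_iff, mem_eigenspace_iff, toLin'_apply]
  exact ⟨fun ⟨v, hv, hv0⟩ => ⟨v, hv0, hv⟩, fun ⟨v, hv0, hv⟩ => ⟨v, hv, hv0⟩⟩

theorem spectralRadius_eq_nnnorm_of_mem {𝕜 A : Type*} [NormedField 𝕜] [Ring A] [Algebra 𝕜 A]
    {a : A} {r : 𝕜} (hr : r ∈ spectrum 𝕜 a) (h : ∀ k ∈ spectrum 𝕜 a, ‖k‖ ≤ ‖r‖) :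
    spectralRadius 𝕜 a = ‖r‖₊ :=
  le_antisymm (iSup₂_le fun k hk => ENNReal.coe_le_coe.2 (h k hk))
    (le_iSup₂ (f := fun k (_ : k ∈ spectrum 𝕜 a) => (‖k‖₊ : ENNReal)) r hr)

section NonnegMatrix

variable {ι : Type*} [Fintype ι] {A : Matrix ι ι ℝ}

theorem Matrix.ofReal_mem_spectrum_map_of_mulVec_eq_smul [DecidableEq ι] {f : ι → ℝ}
    (hf : f ≠ 0) {μ : ℝ} (heig : A *ᵥ f = μ • f) :
    (μ : ℂ) ∈ spectrum ℂ (A.map (fun x => (x : ℂ))) := by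
  refine (A.map _).mem_spectrum_iff_exists_mulVec_eq_smul _ |>.2 ⟨(↑) ∘ f, ?_, ?_⟩
  · exact fun h => hf <| funext fun i => Complex.ofReal_injective (congrFun h i)
  · funext i
    exact (RingHom.map_mulVec Complex.ofRealHom A f i).symm.trans (by simp [heig])

theorem Matrix.nonneg_of_mulVec_eq_smul [Nonempty ι] (hA : ∀ i j, 0 ≤ A i j) {f : ι → ℝ}
    (hf : ∀ i, 0 < f i) {μ : ℝ} (heig : A *ᵥ f = μ • f) : 0 ≤ μ := by
  obtain ⟨i⟩ := ‹Nonempty ι›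
  have hAf : 0 ≤ (A *ᵥ f) i :=
    dotProduct_nonneg_of_nonneg (hA i) fun j => (hf j).le
  rw [heig, Pi.smul_apply, smul_eq_mul] at hAf
  exact nonneg_of_mul_nonneg_left hAf (hf i)

theorem Matrix.norm_mulVec_map_ofReal_le (hA : ∀ i j, 0 ≤ A i j) (v : ι → ℂ) (i : ι) :
    ‖(A.map (fun x => (x : ℂ)) *ᵥ v) i‖ ≤ (A *ᵥ fun j => ‖v j‖) i :=
  calc ‖(A.map (fun x => (x : ℂ)) *ᵥ v) i‖ ≤ ∑ j, ‖(A i j : ℂ) * v j‖ := norm_sum_le _ _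
    _ = (A *ᵥ fun j => ‖v j‖) i := by
      simp only [norm_mul, Complex.norm_real, Real.norm_of_nonneg (hA i _)]
      rfl

theorem Matrix.norm_le_of_mulVec_map_ofReal_eq_smul (hA : ∀ i j, 0 ≤ A i j) {f : ι → ℝ}
    (hf : ∀ i, 0 < f i) {μ : ℝ} (heig : A *ᵥ f = μ • f) {z : ℂ} {v : ι → ℂ} (hv : v ≠ 0)
    (hz : A.map (fun x => (x : ℂ)) *ᵥ v = z • v) : ‖z‖ ≤ μ := by
  obtain ⟨j, hj⟩ := Function.ne_iff.mp hv
  obtain ⟨i₀, -, hmax⟩ := Finset.univ.exists_max_image (fun i => ‖v i‖ / f i) ⟨j, by simp⟩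
  set c := ‖v i₀‖ / f i₀
  have hle : (fun j => ‖v j‖) ≤ c • f := fun j =>
    (div_le_iff₀ (hf j)).1 (hmax j (Finset.mem_univ j))
  have hvi₀ : 0 < ‖v i₀‖ := by
    have := (div_pos (norm_pos_iff.2 hj) (hf j)).trans_le (hmax j (Finset.mem_univ j))
    exact (div_pos_iff_of_pos_right (hf i₀)).1 this
  have key : ‖z‖ * ‖v i₀‖ ≤ μ * ‖v i₀‖ :=
    calc ‖z‖ * ‖v i₀‖ = ‖(A.map (fun x => (x : ℂ)) *ᵥ v) i₀‖ := by
          rw [hz, Pi.smul_apply, smul_eq_mul, norm_mul]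
      _ ≤ (A *ᵥ fun j => ‖v j‖) i₀ := A.norm_mulVec_map_ofReal_le hA v i₀
      _ ≤ (A *ᵥ c • f) i₀ := dotProduct_le_dotProduct_of_nonneg_left hle (hA i₀)
      _ = μ * ‖v i₀‖ := by
        rw [mulVec_smul, heig, ← div_mul_cancel₀ ‖v i₀‖ (hf i₀).ne']
        simp only [Pi.smul_apply, smul_eq_mul]
        ring
  exact le_of_mul_le_mul_right key hvi₀

end NonnegMatrix

/-- Perron–Frobenius, part 3: if a square matrix with nonnegative real
entries has an eigenvector with strictly positive entries, then the corresponding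
eigenvalue equals the spectral radius of the matrix. -/
theorem eigenvalue_of_positive_eigenvector_eq_spectralRadius
    (n : ℕ) (hn : 0 < n) (A : Matrix (Fin n) (Fin n) ℝ)
    (hA : ∀ i j, 0 ≤ A i j)
    (f : Fin n → ℝ) (hf : ∀ i, 0 < f i)
    (μ : ℝ) (heig : A.mulVec f = μ • f) :
    spectralRadius ℂ (A.map (fun x => (x : ℂ))) = ENNReal.ofReal μ := by
  have : Nonempty (Fin n) := ⟨⟨0, hn⟩⟩
  have hμ : 0 ≤ μ := A.nonneg_of_mulVec_eq_smul hA hf heig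
  have hf0 : f ≠ 0 := fun h => (hf ⟨0, hn⟩).ne' (congrFun h _)
  have hnorm : ‖(μ : ℂ)‖ = μ := by rw [Complex.norm_real, Real.norm_of_nonneg hμ]
  rw [spectralRadius_eq_nnnorm_of_mem (A.ofReal_mem_spectrum_map_of_mulVec_eq_smul hf0 heig)]
  · rw [← enorm_eq_nnnorm, ← ofReal_norm, hnorm]
  · intro z hz
    obtain ⟨v, hv, hvz⟩ := (A.map _).mem_spectrum_iff_exists_mulVec_eq_smul z |>.1 hz
    rw [hnorm]
    exact A.norm_le_of_mulVec_map_ofReal_eq_smul hA hf heig hv hvz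
end

section
/- Let B be a rank-3 fusion algebra with basis {x_1 = 1, x_2, x_3} where x_2^* = x_3 (so x_2 is not self-adjoint). Then d_2 := d(x_2) = d(x_3), and the fusion rules are: x_2 x_2 = ((d_2^2-1)/(2d_2)) x_2 + ((d_2^2+1)/(2d_2)) x_3, x_2 x_3 = x_1 + ((d_2^2-1)/(2d_2))(x_2 + x_3), and x_3 x_3 = ((d_2^2+1)/(2d_2)) x_2 + ((d_2^2-1)/(2d_2)) x_3. In particular the Frobenius–Perron dimension μ = 1 + 2 d_2^2 ≥ 3. -/
/-!
Let `σ` be the involution of indices induced by `star`. Associativity makes `N j k (σ l)`,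
the coefficient of the unit in `b j * b k * b l`, invariant under cyclic permutations of
`(j, k, l)`, and applying `star` gives `N (σ k) (σ j) s = N j k (σ s)`. In rank three with
`star (b 1) = b 2` these symmetries leave only `a = N 1 1 1` and `c = N 1 1 2` free. The
dimension equations then force `d 1 = d 2`, since otherwise they combine to
`d 1 ^ 2 + d 2 ^ 2 + 1 = 0`, and with `x = d 1` they read `x² = (a + c) x` and
`x² = 1 + 2 a x`, which determine `a` and `c`.
-/

namespace FusionAlgebra

open Module

section

variable {ι B : Type*} [Fintype ι] [Ring B] [Algebra ℂ B]
  {b : Basis ι ℂ B} {N : ι → ι → ι → ℝ}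

theorem repr_mul (hmul : ∀ j k, b j * b k = ∑ s, (N j k s : ℂ) • b s) (j k s : ι) :
    b.repr (b j * b k) s = N j k s := by
  rw [hmul, b.repr_sum_self]

theorem structConst_assoc (hmul : ∀ j k, b j * b k = ∑ s, (N j k s : ℂ) • b s)
    (j k l t : ι) :
    ∑ s, N j k s * N s l t = ∑ s, N k l s * N j s t := by
  have h := congrArg (fun x => b.repr x t) (mul_assoc (b j) (b k) (b l))
  simp only [hmul j k, hmul k l, Finset.sum_mul, Finset.mul_sum, smul_mul_assoc,
    mul_smul_comm, map_sum, map_smul, Finsupp.coe_finsetSum, Finset.sum_apply,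
    Finsupp.smul_apply, repr_mul hmul, smul_eq_mul] at h
  exact_mod_cast h

theorem structConst_cyclic [DecidableEq ι]
    (hmul : ∀ j k, b j * b k = ∑ s, (N j k s : ℂ) • b s)
    {σ : ι → ι} (hσ : Function.Involutive σ) {e : ι}
    (hdual : ∀ j k, N j k e = if j = σ k then 1 else 0) (j k l : ι) :
    N j k (σ l) = N k l (σ j) := by
  have h := structConst_assoc hmul j k l e
  simpa only [hdual, mul_ite, mul_one, mul_zero, Finset.sum_ite_eq', Finset.mem_univ,
    if_true, eq_comm (a := j), hσ.eq_iff] using h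

theorem structConst_star [StarRing B] [StarModule ℂ B]
    (hmul : ∀ j k, b j * b k = ∑ s, (N j k s : ℂ) • b s)
    {σ : ι → ι} (hσ : Function.Involutive σ) (hstar : ∀ j, star (b j) = b (σ j))
    (j k s : ι) :
    N (σ k) (σ j) s = N j k (σ s) := by
  have h : b (σ k) * b (σ j) = ∑ t, (N j k (σ t) : ℂ) • b t := by
    rw [← hstar, ← hstar, ← star_mul, hmul, star_sum]
    simp only [star_smul, Complex.star_def, Complex.conj_ofReal, hstar]
    exact Fintype.sum_equiv (hσ.toPerm σ) _ _ fun t => by simp [hσ t]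
  have hs := repr_mul hmul (σ k) (σ j) s
  rw [h, b.repr_sum_self] at hs
  exact_mod_cast hs.symm

end

theorem structConst_rank_three_of_star {B : Type*} [Ring B] [Algebra ℂ B] [StarRing B]
    [StarModule ℂ B] {b : Basis (Fin 3) ℂ B} {N : Fin 3 → Fin 3 → Fin 3 → ℝ}
    (hmul : ∀ j k, b j * b k = ∑ s, (N j k s : ℂ) • b s)
    (hdual : ∀ j k, N j k 0 = if j = (![0, 2, 1] : Fin 3 → Fin 3) k then 1 else 0)
    (hstar : ∀ j, star (b j) = b (![0, 2, 1] j)) :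
    N 1 2 1 = N 1 1 1 ∧ N 1 2 2 = N 1 1 1 ∧ N 2 2 1 = N 1 1 2 ∧ N 2 2 2 = N 1 1 1 := by
  have hσ : Function.Involutive (![0, 2, 1] : Fin 3 → Fin 3) := by
    intro i; fin_cases i <;> rfl
  have cyc := structConst_cyclic hmul hσ hdual
  have sym := structConst_star hmul hσ hstar
  have h122 : N 1 2 2 = N 1 1 1 := by simpa using (cyc 1 2 1).trans (cyc 2 1 1)
  exact ⟨by simpa [h122] using sym 1 2 1, h122, by simpa using sym 1 1 1,
    by simpa using sym 1 1 2⟩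

theorem eq_of_rank_three_dims {a c x y : ℝ}
    (h11 : x * x = a * x + c * y) (h12 : x * y = 1 + a * x + a * y)
    (h22 : y * y = c * x + a * y) : x = y := by
  by_contra hne
  have hsum : x + y = a - c :=
    mul_left_cancel₀ (sub_ne_zero.mpr hne) (by linear_combination h11 - h22)
  have hcontra : x ^ 2 + y ^ 2 + 1 = 0 := by linear_combination h11 + y * hsum - h12
  exact absurd hcontra (by positivity)

theorem coeffs_of_rank_three_dims {a c x : ℝ}
    (h11 : x * x = a * x + c * x) (h12 : x * x = 1 + a * x + a * x) :
    a = (x ^ 2 - 1) / (2 * x) ∧ c = (x ^ 2 + 1) / (2 * x) := by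
  have hx : 2 * x ≠ 0 := by
    intro h
    obtain rfl : x = 0 := by linarith
    norm_num at h12
  constructor <;> rw [eq_div_iff hx]
  · linear_combination -h12
  · linear_combination -2 * h11 + h12

end FusionAlgebra

open FusionAlgebra in
theorem rank_three_type_II_classification_general
    (B : Type*) [Ring B] [Algebra ℂ B] [StarRing B] [StarModule ℂ B]
    (b : Module.Basis (Fin 3) ℂ B)
    (hstar0 : star (b 0) = b 0)
    (hstar1 : star (b 1) = b 2)
    (hstar2 : star (b 2) = b 1)
    (N : Fin 3 → Fin 3 → Fin 3 → ℝ)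
    (hmul : ∀ j k, b j * b k = ∑ s, (N j k s : ℂ) • b s)
    (hdual : ∀ j k, N j k 0 = if j = (![0, 2, 1] : Fin 3 → Fin 3) k then 1 else 0)
    (d : Fin 3 → ℝ) (hd1 : ∀ j, 1 ≤ d j) (hd0 : d 0 = 1)
    (hdmul : ∀ j k, d j * d k = ∑ s, N j k s * d s) :
    d 1 = d 2 ∧
    b 1 * b 1 = (((d 1 ^ 2 - 1) / (2 * d 1) : ℝ) : ℂ) • b 1
        + (((d 1 ^ 2 + 1) / (2 * d 1) : ℝ) : ℂ) • b 2 ∧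
    b 1 * b 2 = b 0 + (((d 1 ^ 2 - 1) / (2 * d 1) : ℝ) : ℂ) • (b 1 + b 2) ∧
    b 2 * b 2 = (((d 1 ^ 2 + 1) / (2 * d 1) : ℝ) : ℂ) • b 1
        + (((d 1 ^ 2 - 1) / (2 * d 1) : ℝ) : ℂ) • b 2 ∧
    3 ≤ 1 + 2 * d 1 ^ 2 := by
  have hstar : ∀ j, star (b j) = b (![0, 2, 1] j) := by
    intro j; fin_cases j <;> assumption
  obtain ⟨h121, h122, h221, h222⟩ := structConst_rank_three_of_star hmul hdual hstar
  have h110 : N 1 1 0 = 0 := by simpa using hdual 1 1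
  have h120 : N 1 2 0 = 1 := by simpa using hdual 1 2
  have h220 : N 2 2 0 = 0 := by simpa using hdual 2 2
  have dim : ∀ j k, d j * d k = N j k 0 + N j k 1 * d 1 + N j k 2 * d 2 := fun j k => by
    rw [hdmul, Fin.sum_univ_three, hd0, mul_one]
  have e11 : d 1 * d 1 = N 1 1 1 * d 1 + N 1 1 2 * d 2 := by rw [dim, h110, zero_add]
  have e12 : d 1 * d 2 = 1 + N 1 1 1 * d 1 + N 1 1 1 * d 2 := by
    rw [dim, h120, h121, h122, add_assoc]
  have e22 : d 2 * d 2 = N 1 1 2 * d 1 + N 1 1 1 * d 2 := by rw [dim, h220, h221, h222, zero_add]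
  have hd := eq_of_rank_three_dims e11 e12 e22
  rw [← hd] at e11 e12
  obtain ⟨ha, hc⟩ := coeffs_of_rank_three_dims e11 e12
  refine ⟨hd, ?_, ?_, ?_, by nlinarith [hd1 1]⟩
  · rw [hmul, Fin.sum_univ_three, h110, ha, hc, Complex.ofReal_zero, zero_smul, zero_add]
  · rw [hmul, Fin.sum_univ_three, h120, h121, h122, ha, Complex.ofReal_one, one_smul,
      smul_add, add_assoc]
  · rw [hmul, Fin.sum_univ_three, h220, h221, h222, ha, hc, Complex.ofReal_zero, zero_smul,
      zero_add]

/-- Rank-three classification, type II: in a rank-3 fusion algebra with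
basis `{x₁ = 1, x₂, x₃}` and `x₂* = x₃`, one has `d₂ := d(x₂) = d(x₃)`, the fusion
rules are determined by `d₂`, and the Frobenius–Perron dimension `μ = 1 + 2d₂² ≥ 3`. -/
theorem rank_three_type_II_classification
    (B : Type*) [Ring B] [Algebra ℂ B] [StarRing B] [StarModule ℂ B]
    (b : Module.Basis (Fin 3) ℂ B) (hone : b 0 = 1)
    (hstar0 : star (b 0) = b 0)
    (hstar1 : star (b 1) = b 2)
    (hstar2 : star (b 2) = b 1)
    (N : Fin 3 → Fin 3 → Fin 3 → ℝ)
    (hN : ∀ j k s, 0 ≤ N j k s)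
    (hmul : ∀ j k, b j * b k = ∑ s, (N j k s : ℂ) • b s)
    (hdual : ∀ j k, N j k 0 = if j = (![0, 2, 1] : Fin 3 → Fin 3) k then 1 else 0)
    (d : Fin 3 → ℝ) (hd1 : ∀ j, 1 ≤ d j) (hd0 : d 0 = 1)
    (hdmul : ∀ j k, d j * d k = ∑ s, N j k s * d s) :
    d 1 = d 2 ∧
    b 1 * b 1 = (((d 1 ^ 2 - 1) / (2 * d 1) : ℝ) : ℂ) • b 1
        + (((d 1 ^ 2 + 1) / (2 * d 1) : ℝ) : ℂ) • b 2 ∧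
    b 1 * b 2 = b 0 + (((d 1 ^ 2 - 1) / (2 * d 1) : ℝ) : ℂ) • (b 1 + b 2) ∧
    b 2 * b 2 = (((d 1 ^ 2 + 1) / (2 * d 1) : ℝ) : ℂ) • b 1
        + (((d 1 ^ 2 - 1) / (2 * d 1) : ℝ) : ℂ) • b 2 ∧
    3 ≤ 1 + 2 * d 1 ^ 2 :=
  rank_three_type_II_classification_general B b hstar0 hstar1 hstar2 N hmul hdual d hd1 hd0 hdmul
end

section
/- Let B be a rank-3 fusion algebra with basis {x_1 = 1, x_2, x_3}, all self-adjoint, and let d_2 = d(x_2), d_3 = d(x_3). Write x_2 x_3 = a d_3 x_2 + b d_2 x_3 with a, b ≥ 0. Then a + b = 1, and x_2 x_2 = x_1 + ((d_2^2 - 1 - a d_3^2)/d_2) x_2 + a d_3 x_3 and x_3 x_3 = x_1 + b d_2 x_2 + ((d_3^2 - 1 - b d_2^2)/d_3) x_3; in particular d_2^2 - 1 - a d_3^2 ≥ 0 and d_3^2 - 1 - b d_2^2 ≥ 0. -/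
/-!
The functional `τ` = "coefficient of `1`" satisfies `τ ((u * v) * w) = τ (u * (v * w))`, and
`{1, x₂, x₃}` is orthonormal for `(u, v) ↦ τ (u * v)`. Hence the coefficient of `x₃` in `x₂ x₂`
equals the coefficient of `x₂` in `x₂ x₃`, and the coefficient of `x₂` in `x₃ x₃` equals the
coefficient of `x₃` in `x₂ x₃` (Frobenius reciprocity). Everything else is read off the
Frobenius–Perron character `d`.
-/

theorem frobenius_reciprocity_of_unit_coeff {R A : Type*} [CommSemiring R] [Semiring A]
    [Algebra R A] (τ : A →ₗ[R] R) (hτ1 : τ 1 = 1) {x y : A}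
    (hτx : τ x = 0) (hτy : τ y = 0) {p q r s α β : R}
    (hxx : x * x = 1 + p • x + q • y) (hxy : x * y = α • x + β • y)
    (hyy : y * y = 1 + r • x + s • y) :
    q = α ∧ r = β := by
  have hτxx : τ (x * x) = 1 := by simp [hxx, hτ1, hτx, hτy]
  have hτxy : τ (x * y) = 0 := by simp [hxy, hτx, hτy]
  have hτyy : τ (y * y) = 1 := by simp [hyy, hτ1, hτx, hτy]
  constructor
  · calc q = τ (x * x * y) := by
          rw [hxx, add_mul, add_mul, one_mul, smul_mul_assoc, smul_mul_assoc]
          simp [hτy, hτxy, hτyy]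
      _ = τ (x * (x * y)) := by rw [mul_assoc]
      _ = α := by
          rw [hxy, mul_add, mul_smul_comm, mul_smul_comm]
          simp [hτxx, hτxy]
  · calc r = τ (x * (y * y)) := by
          rw [hyy, mul_add, mul_add, mul_one, mul_smul_comm, mul_smul_comm]
          simp [hτx, hτxx, hτxy]
      _ = τ (x * y * y) := by rw [mul_assoc]
      _ = β := by
          rw [hxy, add_mul, smul_mul_assoc, smul_mul_assoc]
          simp [hτxy, hτyy]

theorem eq_div_and_nonneg_of_mul_eq {K : Type*} [Field K] [LinearOrder K] [IsStrictOrderedRing K]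
    {p d X : K} (hp : 0 ≤ p) (hd : 0 < d) (h : p * d = X) : p = X / d ∧ 0 ≤ X :=
  ⟨by rw [eq_div_iff hd.ne', h], h ▸ mul_nonneg hp hd.le⟩

theorem rank_three_type_I_classification_general
    (B : Type*) [Ring B] [Algebra ℂ B]
    (b : Module.Basis (Fin 3) ℂ B) (hone : b 0 = 1)
    (d2 d3 : ℝ) (hd2 : 1 ≤ d2) (hd3 : 1 ≤ d3)
    (a bb p q r s : ℝ)
    (hp : 0 ≤ p) (hs : 0 ≤ s)
    (hmul11 : b 1 * b 1 = b 0 + (p : ℂ) • b 1 + (q : ℂ) • b 2)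
    (hmul12 : b 1 * b 2 = ((a * d3 : ℝ) : ℂ) • b 1 + ((bb * d2 : ℝ) : ℂ) • b 2)
    (hmul22 : b 2 * b 2 = b 0 + (r : ℂ) • b 1 + (s : ℂ) • b 2)
    (hchar11 : d2 * d2 = 1 + p * d2 + q * d3)
    (hchar12 : d2 * d3 = (a * d3) * d2 + (bb * d2) * d3)
    (hchar22 : d3 * d3 = 1 + r * d2 + s * d3) :
    a + bb = 1 ∧
    q = a * d3 ∧
    r = bb * d2 ∧
    p = (d2 ^ 2 - 1 - a * d3 ^ 2) / d2 ∧
    s = (d3 ^ 2 - 1 - bb * d2 ^ 2) / d3 ∧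
    0 ≤ d2 ^ 2 - 1 - a * d3 ^ 2 ∧
    0 ≤ d3 ^ 2 - 1 - bb * d2 ^ 2 := by
  have hd2pos : 0 < d2 := one_pos.trans_le hd2
  have hd3pos : 0 < d3 := one_pos.trans_le hd3
  have hab : a + bb = 1 :=
    mul_right_cancel₀ (mul_pos hd2pos hd3pos).ne'
      (by linear_combination -hchar12 : (a + bb) * (d2 * d3) = 1 * (d2 * d3))
  rw [hone] at hmul11 hmul22
  obtain ⟨hqC, hrC⟩ := frobenius_reciprocity_of_unit_coeff (b.coord 0)
    (by simp [← hone]) (by simp) (by simp) hmul11 hmul12 hmul22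
  have hq : q = a * d3 := by exact_mod_cast hqC
  have hr : r = bb * d2 := by exact_mod_cast hrC
  obtain ⟨hpeq, hpnum⟩ := eq_div_and_nonneg_of_mul_eq hp hd2pos
    (by linear_combination -hchar11 - d3 * hq : p * d2 = d2 ^ 2 - 1 - a * d3 ^ 2)
  obtain ⟨hseq, hsnum⟩ := eq_div_and_nonneg_of_mul_eq hs hd3pos
    (by linear_combination -hchar22 - d2 * hr : s * d3 = d3 ^ 2 - 1 - bb * d2 ^ 2)
  exact ⟨hab, hq, hr, hpeq, hseq, hpnum, hsnum⟩

/-- Rank-three classification, type I: in a rank-3 fusion algebra with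
self-adjoint basis `{x₁ = 1, x₂, x₃}`, writing `x₂x₃ = a d₃ x₂ + b d₂ x₃` with
`a, b ≥ 0`, one has `a + b = 1` and the fusion rules
`x₂² = x₁ + ((d₂²-1-a d₃²)/d₂) x₂ + a d₃ x₃`,
`x₃² = x₁ + b d₂ x₂ + ((d₃²-1-b d₂²)/d₃) x₃`;
in particular `d₂²-1-a d₃² ≥ 0` and `d₃²-1-b d₂² ≥ 0`. -/
theorem rank_three_type_I_classification
    (B : Type*) [Ring B] [Algebra ℂ B] [StarRing B] [StarModule ℂ B]
    (b : Module.Basis (Fin 3) ℂ B) (hone : b 0 = 1)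
    (hsa : ∀ j, star (b j) = b j)
    (d2 d3 : ℝ) (hd2 : 1 ≤ d2) (hd3 : 1 ≤ d3)
    (a bb p q r s : ℝ)
    (ha : 0 ≤ a) (hb : 0 ≤ bb) (hp : 0 ≤ p) (hq : 0 ≤ q) (hr : 0 ≤ r) (hs : 0 ≤ s)
    (hmul11 : b 1 * b 1 = b 0 + (p : ℂ) • b 1 + (q : ℂ) • b 2)
    (hmul12 : b 1 * b 2 = ((a * d3 : ℝ) : ℂ) • b 1 + ((bb * d2 : ℝ) : ℂ) • b 2)
    (hmul22 : b 2 * b 2 = b 0 + (r : ℂ) • b 1 + (s : ℂ) • b 2)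
    (hchar11 : d2 * d2 = 1 + p * d2 + q * d3)
    (hchar12 : d2 * d3 = (a * d3) * d2 + (bb * d2) * d3)
    (hchar22 : d3 * d3 = 1 + r * d2 + s * d3) :
    a + bb = 1 ∧
    q = a * d3 ∧
    r = bb * d2 ∧
    p = (d2 ^ 2 - 1 - a * d3 ^ 2) / d2 ∧
    s = (d3 ^ 2 - 1 - bb * d2 ^ 2) / d3 ∧
    0 ≤ d2 ^ 2 - 1 - a * d3 ^ 2 ∧
    0 ≤ d3 ^ 2 - 1 - bb * d2 ^ 2 :=
  rank_three_type_I_classification_general B b hone d2 d3 hd2 hd3 a bb p q r s hp hs hmul11 hmul12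
    hmul22 hchar11 hchar12 hchar22
end

section
/- Let B be a fusion ring with basis {x_1 = 1, ..., x_m}, fusion coefficients N_{j,k}^ℓ ∈ ℤ_{≥0}, and Frobenius–Perron dimensions d(x_j). Then for all j, k: Σ_{ℓ=1}^m (N_{j,k}^ℓ)^2 ≤ min{d(x_j)^2, d(x_k)^2}. -/
/-!
Squaring and summing `N_{jk}^ℓ` is, by Frobenius reciprocity and associativity, the coefficient
sum `Σ_t N_{j^* j}^t N_{t k}^k`. A single coefficient `N_{t k}^k` is at most `d(x_t)`, because
`N_{tk}^k d(x_k) ≤ d(x_t) d(x_k)`, so the sum is at most `Σ_t N_{j^* j}^t d(x_t) = d(x_j)^2`.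
The bound by `d(x_k)^2` is the mirror image, through `Σ_t N_{k k^*}^t N_{j t}^j`.
-/

open Finset

namespace FusionRing

variable {m : ℕ} {N : Fin m → Fin m → Fin m → ℕ} {d : Fin m → ℝ}

theorem coeff_mul_dim_le (hd : ∀ j, 0 ≤ d j)
    (hdmul : ∀ j k, d j * d k = ∑ s, (N j k s : ℝ) * d s) (a b c : Fin m) :
    (N a b c : ℝ) * d c ≤ d a * d b := by
  rw [hdmul a b]
  exact single_le_sum (f := fun s => (N a b s : ℝ) * d s)
    (fun s _ => mul_nonneg (Nat.cast_nonneg _) (hd s)) (mem_univ c)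

theorem coeff_le_dim_left (hd : ∀ j, 0 < d j)
    (hdmul : ∀ j k, d j * d k = ∑ s, (N j k s : ℝ) * d s) (a b : Fin m) :
    (N a b b : ℝ) ≤ d a :=
  le_of_mul_le_mul_right (coeff_mul_dim_le (fun j => (hd j).le) hdmul a b b) (hd b)

theorem coeff_le_dim_right (hd : ∀ j, 0 < d j)
    (hdmul : ∀ j k, d j * d k = ∑ s, (N j k s : ℝ) * d s) (a b : Fin m) :
    (N a b a : ℝ) ≤ d b := by
  have h := coeff_mul_dim_le (fun j => (hd j).le) hdmul a b a
  rw [mul_comm (d a)] at h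
  exact le_of_mul_le_mul_right h (hd a)

theorem sum_coeff_mul_le (hdmul : ∀ j k, d j * d k = ∑ s, (N j k s : ℝ) * d s)
    {f : Fin m → ℝ} (hf : ∀ t, f t ≤ d t) (a b : Fin m) :
    ∑ t, (N a b t : ℝ) * f t ≤ d a * d b := by
  rw [hdmul a b]
  exact sum_le_sum fun t _ => mul_le_mul_of_nonneg_left (hf t) (Nat.cast_nonneg _)

variable (σ : Fin m → Fin m)

theorem sum_sq_coeff_eq_left
    (hassoc : ∀ j k l s, ∑ t, N j k t * N t l s = ∑ t, N k l t * N j t s)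
    (hfrob : ∀ j k s, N j k s = N (σ j) s k) (j k : Fin m) :
    ∑ ℓ, N j k ℓ ^ 2 = ∑ t, N (σ j) j t * N t k k := by
  rw [hassoc]
  exact sum_congr rfl fun t _ => by rw [sq, ← hfrob]

theorem sum_sq_coeff_eq_right
    (hassoc : ∀ j k l s, ∑ t, N j k t * N t l s = ∑ t, N k l t * N j t s)
    (hfrob' : ∀ j k s, N j k s = N s (σ k) j) (j k : Fin m) :
    ∑ ℓ, N j k ℓ ^ 2 = ∑ t, N k (σ k) t * N j t j := by
  rw [← hassoc]
  exact sum_congr rfl fun t _ => by rw [sq, ← hfrob']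

end FusionRing

open FusionRing in
theorem fusion_ring_sum_sq_coeff_le_general
    (m : ℕ)
    (N : Fin m → Fin m → Fin m → ℕ)
    (σ : Fin m → Fin m)
    
    (hassoc : ∀ j k l s, ∑ t, N j k t * N t l s = ∑ t, N k l t * N j t s)
    (hfrob : ∀ j k s, N j k s = N (σ j) s k)
    (hfrob' : ∀ j k s, N j k s = N s (σ k) j)
    (d : Fin m → ℝ) (hd1 : ∀ j, 1 ≤ d j) (hdσ : ∀ j, d (σ j) = d j)
    (hdmul : ∀ j k, d j * d k = ∑ s, (N j k s : ℝ) * d s) :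
    ∀ j k, (∑ ℓ, ((N j k ℓ : ℝ)) ^ 2) ≤ min (d j ^ 2) (d k ^ 2) := by
  intro j k
  have hd : ∀ a, 0 < d a := fun a => one_pos.trans_le (hd1 a)
  refine le_min ?_ ?_
  · calc ∑ ℓ, (N j k ℓ : ℝ) ^ 2 = ∑ t, (N (σ j) j t : ℝ) * N t k k := by
          exact_mod_cast sum_sq_coeff_eq_left σ hassoc hfrob j k
      _ ≤ d (σ j) * d j := sum_coeff_mul_le hdmul (coeff_le_dim_left hd hdmul · k) _ _
      _ = d j ^ 2 := by rw [hdσ, sq]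
  · calc ∑ ℓ, (N j k ℓ : ℝ) ^ 2 = ∑ t, (N k (σ k) t : ℝ) * N j t j := by
          exact_mod_cast sum_sq_coeff_eq_right σ hassoc hfrob' j k
      _ ≤ d k * d (σ k) := sum_coeff_mul_le hdmul (coeff_le_dim_right hd hdmul j ·) _ _
      _ = d k ^ 2 := by rw [hdσ, sq]

/-- in a fusion ring, `Σ_ℓ (N_{j,k}^ℓ)² ≤ min{d(x_j)², d(x_k)²}`. -/
theorem fusion_ring_sum_sq_coeff_le
    (m : ℕ) (hm : 0 < m)
    (N : Fin m → Fin m → Fin m → ℕ)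
    (σ : Fin m → Fin m) (hσ : ∀ j, σ (σ j) = j)
    (hunit : ∀ k s, N ⟨0, hm⟩ k s = if k = s then 1 else 0)
    (hunit' : ∀ j s, N j ⟨0, hm⟩ s = if j = s then 1 else 0)
    (hdual : ∀ j k, N j k ⟨0, hm⟩ = if j = σ k then 1 else 0)
    (hassoc : ∀ j k l s, ∑ t, N j k t * N t l s = ∑ t, N k l t * N j t s)
    (hfrob : ∀ j k s, N j k s = N (σ j) s k)
    (hfrob' : ∀ j k s, N j k s = N s (σ k) j)
    (d : Fin m → ℝ) (hd1 : ∀ j, 1 ≤ d j) (hdσ : ∀ j, d (σ j) = d j)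
    (hdmul : ∀ j k, d j * d k = ∑ s, (N j k s : ℝ) * d s) :
    ∀ j k, (∑ ℓ, ((N j k ℓ : ℝ)) ^ 2) ≤ min (d j ^ 2) (d k ^ 2) :=
  fusion_ring_sum_sq_coeff_le_general m N σ hassoc hfrob hfrob' d hd1 hdσ hdmul
end

section
/- Let B be a fusion ring with fusion coefficients N_{j,k}^ℓ and Frobenius–Perron dimensions d(x_j). Then for all j, k, ℓ and every real t ≥ 1: N_{j,k}^ℓ ≤ d(x_ℓ) · d(x_j)^{(2-t)/t} · d(x_k)^{(t-2)/t}. In particular (taking t = 2), N_{j,k}^ℓ ≤ min{d(x_j), d(x_k), d(x_ℓ)}. -/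
/-!
Expanding `d j * d k = ∑ s, N j k s * d s` and dropping all terms but one gives
`N j k ℓ * d ℓ ≤ d j * d k`. Applied to the Frobenius rotations `N (σ j) ℓ k` and `N ℓ (σ k) j`
of the same coefficient, this yields `N ≤ d ℓ * r` and `N ≤ d ℓ / r` with `r = d j / d k`, hence
`N ≤ d ℓ * r ^ e` for every `e ∈ [-1, 1]`: for `r ≥ 1` the first bound is the weaker one at `e = -1`,
for `r ≤ 1` at `e = 1`. The theorem is the case `e = (2 - t) / t`, and `e = 0` gives the bound by
`d ℓ`, which the rotations transport to `d j` and `d k`.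
-/

theorem le_mul_rpow_of_le_mul_of_le_div {x c r e : ℝ} (hc : 0 ≤ c) (hr : 0 < r)
    (he₀ : -1 ≤ e) (he₁ : e ≤ 1) (h₁ : x ≤ c * r) (h₂ : x ≤ c / r) : x ≤ c * r ^ e := by
  rcases le_total 1 r with hr1 | hr1
  · calc x ≤ c / r := h₂
      _ = c * r ^ (-1 : ℝ) := by rw [Real.rpow_neg_one, div_eq_mul_inv]
      _ ≤ c * r ^ e := mul_le_mul_of_nonneg_left (Real.rpow_le_rpow_of_exponent_le hr1 he₀) hc
  · calc x ≤ c * r := h₁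
      _ = c * r ^ (1 : ℝ) := by rw [Real.rpow_one]
      _ ≤ c * r ^ e := mul_le_mul_of_nonneg_left (Real.rpow_le_rpow_of_exponent_ge hr hr1 he₁) hc

section FusionCoefficients

variable {ι : Type*} [Fintype ι] (N : ι → ι → ι → ℕ) (σ : ι → ι) (d : ι → ℝ)

theorem fusion_coeff_mul_le (hd : ∀ j, 0 ≤ d j)
    (hdmul : ∀ j k, d j * d k = ∑ s, (N j k s : ℝ) * d s) (j k ℓ : ι) :
    (N j k ℓ : ℝ) * d ℓ ≤ d j * d k := by
  rw [hdmul]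
  exact Finset.single_le_sum (f := fun s => (N j k s : ℝ) * d s)
    (fun s _ => mul_nonneg (Nat.cast_nonneg _) (hd s)) (Finset.mem_univ ℓ)

variable (hd : ∀ j, 0 < d j) (hdσ : ∀ j, d (σ j) = d j)
  (hdmul : ∀ j k, d j * d k = ∑ s, (N j k s : ℝ) * d s)
include hd hdσ hdmul

theorem fusion_coeff_le_mul_div (hfrob : ∀ j k s, N j k s = N (σ j) s k) (j k ℓ : ι) :
    (N j k ℓ : ℝ) ≤ d ℓ * (d j / d k) := by
  have h := fusion_coeff_mul_le N d (fun s => (hd s).le) hdmul (σ j) ℓ k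
  rw [← hfrob, hdσ] at h
  rw [← mul_div_assoc, le_div_iff₀ (hd k)]
  linarith

theorem fusion_coeff_le_div_div (hfrob' : ∀ j k s, N j k s = N s (σ k) j) (j k ℓ : ι) :
    (N j k ℓ : ℝ) ≤ d ℓ / (d j / d k) := by
  have h := fusion_coeff_mul_le N d (fun s => (hd s).le) hdmul ℓ (σ k) j
  rw [← hfrob', hdσ] at h
  rw [div_div_eq_mul_div, le_div_iff₀ (hd j)]
  linarith

variable (hfrob : ∀ j k s, N j k s = N (σ j) s k) (hfrob' : ∀ j k s, N j k s = N s (σ k) j)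
include hfrob hfrob'

theorem fusion_coeff_le_mul_rpow (j k ℓ : ι) {e : ℝ} (he₀ : -1 ≤ e) (he₁ : e ≤ 1) :
    (N j k ℓ : ℝ) ≤ d ℓ * (d j / d k) ^ e :=
  le_mul_rpow_of_le_mul_of_le_div (hd ℓ).le (div_pos (hd j) (hd k)) he₀ he₁
    (fusion_coeff_le_mul_div N σ d hd hdσ hdmul hfrob j k ℓ)
    (fusion_coeff_le_div_div N σ d hd hdσ hdmul hfrob' j k ℓ)

theorem fusion_coeff_le_dim (j k ℓ : ι) : (N j k ℓ : ℝ) ≤ d ℓ := by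
  simpa using fusion_coeff_le_mul_rpow N σ d hd hdσ hdmul hfrob hfrob' j k ℓ
    (e := 0) (by norm_num) (by norm_num)

end FusionCoefficients

theorem fusion_ring_coeff_bounds_general
    (m : ℕ)
    (N : Fin m → Fin m → Fin m → ℕ)
    (σ : Fin m → Fin m)
    (hfrob : ∀ j k s, N j k s = N (σ j) s k)
    (hfrob' : ∀ j k s, N j k s = N s (σ k) j)
    (d : Fin m → ℝ) (hd1 : ∀ j, 1 ≤ d j) (hdσ : ∀ j, d (σ j) = d j)
    (hdmul : ∀ j k, d j * d k = ∑ s, (N j k s : ℝ) * d s) :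
    (∀ j k ℓ, ∀ t : ℝ, 1 ≤ t →
      (N j k ℓ : ℝ) ≤ d ℓ * d j ^ ((2 - t) / t) * d k ^ ((t - 2) / t)) ∧
    (∀ j k ℓ, (N j k ℓ : ℝ) ≤ min (d j) (min (d k) (d ℓ))) := by
  have hd : ∀ j, 0 < d j := fun j => one_pos.trans_le (hd1 j)
  refine ⟨fun j k ℓ t ht => ?_, fun j k ℓ => le_min ?_ (le_min ?_ ?_)⟩
  · have ht0 : 0 < t := one_pos.trans_le ht
    have hneg : (t - 2) / t = -((2 - t) / t) := by ring
    rw [mul_assoc, hneg, Real.rpow_neg (hd k).le, ← div_eq_mul_inv,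
      ← Real.div_rpow (hd j).le (hd k).le]
    refine fusion_coeff_le_mul_rpow N σ d hd hdσ hdmul hfrob hfrob' j k ℓ ?_ ?_
    · rw [le_div_iff₀ ht0]; linarith
    · rw [div_le_one ht0]; linarith
  · rw [hfrob' j k ℓ]; exact fusion_coeff_le_dim N σ d hd hdσ hdmul hfrob hfrob' _ _ _
  · rw [hfrob j k ℓ]; exact fusion_coeff_le_dim N σ d hd hdσ hdmul hfrob hfrob' _ _ _
  · exact fusion_coeff_le_dim N σ d hd hdσ hdmul hfrob hfrob' _ _ _

/-- in a fusion ring, for every real `t ≥ 1`,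
`N_{j,k}^ℓ ≤ d(x_ℓ) d(x_j)^{(2-t)/t} d(x_k)^{(t-2)/t}`; in particular (t = 2)
`N_{j,k}^ℓ ≤ min{d(x_j), d(x_k), d(x_ℓ)}`. -/
theorem fusion_ring_coeff_bounds
    (m : ℕ) (hm : 0 < m)
    (N : Fin m → Fin m → Fin m → ℕ)
    (σ : Fin m → Fin m) (hσ : ∀ j, σ (σ j) = j)
    (hunit : ∀ k s, N ⟨0, hm⟩ k s = if k = s then 1 else 0)
    (hunit' : ∀ j s, N j ⟨0, hm⟩ s = if j = s then 1 else 0)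
    (hdual : ∀ j k, N j k ⟨0, hm⟩ = if j = σ k then 1 else 0)
    (hassoc : ∀ j k l s, ∑ t, N j k t * N t l s = ∑ t, N k l t * N j t s)
    (hfrob : ∀ j k s, N j k s = N (σ j) s k)
    (hfrob' : ∀ j k s, N j k s = N s (σ k) j)
    (d : Fin m → ℝ) (hd1 : ∀ j, 1 ≤ d j) (hdσ : ∀ j, d (σ j) = d j)
    (hdmul : ∀ j k, d j * d k = ∑ s, (N j k s : ℝ) * d s) :
    (∀ j k ℓ, ∀ t : ℝ, 1 ≤ t →
      (N j k ℓ : ℝ) ≤ d ℓ * d j ^ ((2 - t) / t) * d k ^ ((t - 2) / t)) ∧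
    (∀ j k ℓ, (N j k ℓ : ℝ) ≤ min (d j) (min (d k) (d ℓ))) :=
  fusion_ring_coeff_bounds_general m N σ hfrob hfrob' d hd1 hdσ hdmul
end

section
/- Let A be the fusion bialgebra side of a fusion ring: for x = Σ_j λ_j x_j define ‖x‖_{1,A} = Σ_j |λ_j| d(x_j) and ‖x‖_{∞,A} = max_j |λ_j| / d(x_j), and convolution x * y = Σ_{j,k,s} λ_j λ'_k N_{j,k}^s x_s. Then ‖x * y‖_{∞,A} ≤ ‖x‖_{∞,A} · ‖y‖_{1,A} for all x, y. -/
/-! Rigidity (associativity together with the duality `N_{j,k}^1 = δ_{j,k^*}`) rotates the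
structure constants: `N_{j,k}^s = N_{k,s^*}^{j^*}`. Hence the dimension function is also an
eigenvector when summing over the first index, `Σ_j N_{j,k}^s d_j = d_k d_s`. Bounding
`|λ_j| ≤ ‖x‖_{∞,A} d_j` in the triangle inequality for the `s`-th coefficient of `x * y` then
gives `|(x * y)_s| ≤ ‖x‖_{∞,A} ‖y‖_{1,A} d_s`. -/

open Finset

namespace FusionRing

variable {ι : Type*} [Fintype ι] {N : ι → ι → ι → ℝ} {σ : ι → ι} {e : ι}

section Duality

variable [DecidableEq ι] (hdual : ∀ j k, N j k e = if j = σ k then 1 else 0)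
include hdual

theorem sum_mul_structConst_dual_unit (hσ : Function.Involutive σ) (f : ι → ℝ) (s : ι) :
    ∑ t, f t * N t (σ s) e = f s := by
  simp only [hdual, hσ s, mul_ite, mul_one, mul_zero, sum_ite_eq', mem_univ, if_true]

theorem sum_mul_structConst_unit (hσ : Function.Involutive σ) (f : ι → ℝ) (j : ι) :
    ∑ t, f t * N j t e = f (σ j) := by
  have hiff : ∀ t, j = σ t ↔ σ j = t := fun _ => hσ.eq_iff.symm
  simp only [hdual, hiff, mul_ite, mul_one, mul_zero, sum_ite_eq, mem_univ, if_true]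

theorem structConst_rotate (hσ : Function.Involutive σ)
    (hassoc : ∀ j k l s, ∑ t, N j k t * N t l s = ∑ t, N k l t * N j t s) (j k s : ι) :
    N j k s = N k (σ s) (σ j) := by
  have h := hassoc j k (σ s) e
  rwa [sum_mul_structConst_dual_unit hdual hσ, sum_mul_structConst_unit hdual hσ] at h

theorem sum_structConst_mul_dim (hσ : Function.Involutive σ)
    (hassoc : ∀ j k l s, ∑ t, N j k t * N t l s = ∑ t, N k l t * N j t s)
    {d : ι → ℝ} (hdσ : ∀ j, d (σ j) = d j) (hdmul : ∀ j k, d j * d k = ∑ s, N j k s * d s)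
    (k s : ι) :
    ∑ j, N j k s * d j = d k * d s := by
  calc ∑ j, N j k s * d j = ∑ j, N k (σ s) (σ j) * d (σ j) := by
        refine sum_congr rfl fun j _ => ?_
        rw [structConst_rotate hdual hσ hassoc, hdσ]
    _ = ∑ j, N k (σ s) j * d j := Fintype.sum_equiv hσ.toPerm _ _ fun _ => rfl
    _ = d k * d s := by rw [← hdmul, hdσ]

end Duality

theorem norm_convolution_coeff_le {x y : ι → ℂ} {d : ι → ℝ} {M : ℝ}
    (hN : ∀ j k s, 0 ≤ N j k s) (hx : ∀ j, ‖x j‖ ≤ M * d j) (s : ι) :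
    ‖∑ j, ∑ k, x j * y k * (N j k s : ℂ)‖ ≤ ∑ k, M * ‖y k‖ * ∑ j, N j k s * d j := by
  calc ‖∑ j, ∑ k, x j * y k * (N j k s : ℂ)‖
      ≤ ∑ j, ∑ k, ‖x j‖ * ‖y k‖ * N j k s := by
        refine (norm_sum_le _ _).trans (sum_le_sum fun j _ => (norm_sum_le _ _).trans_eq ?_)
        simp only [norm_mul, Complex.norm_real, Real.norm_of_nonneg (hN j _ s)]
    _ ≤ ∑ j, ∑ k, M * d j * ‖y k‖ * N j k s := by
        gcongr with j _ k _
        · exact hN j k s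
        · exact hx j
    _ = ∑ k, M * ‖y k‖ * ∑ j, N j k s * d j := by
        rw [sum_comm]
        simp only [mul_sum]
        exact sum_congr rfl fun _ _ => sum_congr rfl fun _ _ => by ring

end FusionRing

theorem fusion_convolution_young_inf_one_general
    (m : ℕ) (hm : 0 < m)
    (N : Fin m → Fin m → Fin m → ℝ)
    (hN : ∀ j k s, 0 ≤ N j k s)
    (σ : Fin m → Fin m) (hσ : ∀ j, σ (σ j) = j)
    (hdual : ∀ j k, N j k ⟨0, hm⟩ = if j = σ k then 1 else 0)
    (hassoc : ∀ j k l s, ∑ t, N j k t * N t l s = ∑ t, N k l t * N j t s)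
    (d : Fin m → ℝ) (hd1 : ∀ j, 1 ≤ d j) (hdσ : ∀ j, d (σ j) = d j)
    (hdmul : ∀ j k, d j * d k = ∑ s, N j k s * d s)
    (x y : Fin m → ℂ) :
    Finset.univ.sup'
        (⟨⟨0, hm⟩, Finset.mem_univ _⟩ : (Finset.univ : Finset (Fin m)).Nonempty)
        (fun s => ‖∑ j, ∑ k, x j * y k * (N j k s : ℂ)‖ / d s)
      ≤ (Finset.univ.sup'
            (⟨⟨0, hm⟩, Finset.mem_univ _⟩ : (Finset.univ : Finset (Fin m)).Nonempty)
            (fun j => ‖x j‖ / d j))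
          * ∑ k, ‖y k‖ * d k := by
  have hdpos : ∀ j, 0 < d j := fun j => one_pos.trans_le (hd1 j)
  set M := Finset.univ.sup'
    (⟨⟨0, hm⟩, Finset.mem_univ _⟩ : (Finset.univ : Finset (Fin m)).Nonempty)
    (fun j => ‖x j‖ / d j)
  have hx : ∀ j, ‖x j‖ ≤ M * d j := fun j =>
    (div_le_iff₀ (hdpos j)).1 (le_sup' (fun j => ‖x j‖ / d j) (mem_univ j))
  refine sup'_le _ _ fun s _ => (div_le_iff₀ (hdpos s)).2 ?_
  calc ‖∑ j, ∑ k, x j * y k * (N j k s : ℂ)‖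
      ≤ ∑ k, M * ‖y k‖ * ∑ j, N j k s * d j := FusionRing.norm_convolution_coeff_le hN hx s
    _ = M * (∑ k, ‖y k‖ * d k) * d s := by
        simp only [FusionRing.sum_structConst_mul_dim hdual hσ hassoc hdσ hdmul]
        rw [mul_sum, sum_mul]
        exact sum_congr rfl fun _ _ => by ring

/-- on the fusion-bialgebra side `A` of a fusion ring/algebra,
with `‖x‖_{1,A} = Σ_j |λ_j| d(x_j)`, `‖x‖_{∞,A} = max_j |λ_j|/d(x_j)` and
convolution `x * y = Σ_{j,k,s} λ_j λ'_k N_{j,k}^s x_s`, Young's inequality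
`‖x * y‖_{∞,A} ≤ ‖x‖_{∞,A} ‖y‖_{1,A}` holds. -/
theorem fusion_convolution_young_inf_one
    (m : ℕ) (hm : 0 < m)
    (N : Fin m → Fin m → Fin m → ℝ)
    (hN : ∀ j k s, 0 ≤ N j k s)
    (σ : Fin m → Fin m) (hσ : ∀ j, σ (σ j) = j)
    (hunit : ∀ k s, N ⟨0, hm⟩ k s = if k = s then 1 else 0)
    (hunit' : ∀ j s, N j ⟨0, hm⟩ s = if j = s then 1 else 0)
    (hdual : ∀ j k, N j k ⟨0, hm⟩ = if j = σ k then 1 else 0)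
    (hassoc : ∀ j k l s, ∑ t, N j k t * N t l s = ∑ t, N k l t * N j t s)
    (hfrob : ∀ j k s, N j k s = N (σ j) s k)
    (d : Fin m → ℝ) (hd1 : ∀ j, 1 ≤ d j) (hdσ : ∀ j, d (σ j) = d j)
    (hdmul : ∀ j k, d j * d k = ∑ s, N j k s * d s)
    (x y : Fin m → ℂ) :
    Finset.univ.sup'
        (⟨⟨0, hm⟩, Finset.mem_univ _⟩ : (Finset.univ : Finset (Fin m)).Nonempty)
        (fun s => ‖∑ j, ∑ k, x j * y k * (N j k s : ℂ)‖ / d s)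
      ≤ (Finset.univ.sup'
            (⟨⟨0, hm⟩, Finset.mem_univ _⟩ : (Finset.univ : Finset (Fin m)).Nonempty)
            (fun j => ‖x j‖ / d j))
          * ∑ k, ‖y k‖ * d k :=
  fusion_convolution_young_inf_one_general m hm N hN σ hσ hdual hassoc d hd1 hdσ hdmul x y
end

section
/- Let B̂ = Σ_{j ∈ I} d(x_j) x_j be the element of a fusion ring associated to a subset I ⊆ {1,...,m} of basis indices that is closed under fusion and involution (i.e., the span of {x_j : j ∈ I} is a fusion subring containing 1). Then B̂ satisfies B̂² = μ_I · B̂ where μ_I = Σ_{j ∈ I} d(x_j)^2, and B̂* = B̂. Conversely, if P = Σ_j λ_j x_j with each λ_j ∈ {0, d(x_j)} satisfies P² = λ P and P* = (λ̄/λ) P for some λ ≠ 0, then the set I = {j : λ_j ≠ 0} spans a fusion subring: it is closed under the involution and N_{j,k}^s = 0 whenever j, k ∈ I and s ∉ I. -/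
/-! If `I` is closed under fusion and duality, Frobenius reciprocity `N_{j,k}^s = N_{j^*,s}^k`
turns `Σ_{k∈I} d_k N_{j,k}^s` (for `s ∈ I`) into the full expansion of `d_{j^*} d_s = d_j d_s`,
so the `j`-th row of `B̂²` is `d_j² B̂`. Conversely, the coefficients of `P²` are sums of
nonnegative terms, so a vanishing coefficient at `s ∉ I` forces `N_{j,k}^s = 0` for all
`j, k ∈ I`; and since `P*` is a nonzero multiple of `P`, the support of `P` is `*`-invariant. -/

open Finset

theorem Finset.mem_iff_apply_mem_of_involutive {ι : Type*} {σ : ι → ι} {I : Finset ι}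
    (hσ : Function.Involutive σ) (hσI : ∀ j ∈ I, σ j ∈ I) (s : ι) : s ∈ I ↔ σ s ∈ I :=
  ⟨hσI s, fun h => hσ s ▸ hσI _ h⟩

section FusionRing

variable {ι : Type*} [Fintype ι] {N : ι → ι → ι → ℕ} {σ : ι → ι} {d : ι → ℝ} {I : Finset ι}

theorem dim_mul_eq_sum_of_support_subset (hdmul : ∀ j k, d j * d k = ∑ s, (N j k s : ℝ) * d s)
    {j k : ι} (hsupp : ∀ s ∉ I, N j k s = 0) : d j * d k = ∑ s ∈ I, (N j k s : ℝ) * d s := by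
  rw [hdmul]
  exact (sum_subset (subset_univ I) fun s _ hs => by simp [hsupp s hs]).symm

section Closed

variable (hσI : ∀ j ∈ I, σ j ∈ I) (hcl : ∀ j ∈ I, ∀ k ∈ I, ∀ s, N j k s ≠ 0 → s ∈ I)
include hσI hcl

theorem sum_dim_mul_fusion_of_closed (hfrob : ∀ j k s, N j k s = N (σ j) s k)
    (hdσ : ∀ j, d (σ j) = d j) (hdmul : ∀ j k, d j * d k = ∑ s, (N j k s : ℝ) * d s)
    {j s : ι} (hj : j ∈ I) (hs : s ∈ I) : ∑ k ∈ I, d k * (N j k s : ℝ) = d j * d s :=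
  calc ∑ k ∈ I, d k * (N j k s : ℝ) = ∑ k ∈ I, (N (σ j) s k : ℝ) * d k :=
        sum_congr rfl fun k _ => by rw [hfrob, mul_comm]
    _ = d (σ j) * d s :=
        (dim_mul_eq_sum_of_support_subset hdmul fun k hk =>
          not_ne_iff.mp fun h => hk (hcl _ (hσI j hj) _ hs k h)).symm
    _ = d j * d s := by rw [hdσ]

theorem sum_sum_dim_mul_fusion_of_closed [DecidableEq ι]
    (hfrob : ∀ j k s, N j k s = N (σ j) s k) (hdσ : ∀ j, d (σ j) = d j)
    (hdmul : ∀ j k, d j * d k = ∑ s, (N j k s : ℝ) * d s) (s : ι) :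
    ∑ j ∈ I, ∑ k ∈ I, d j * d k * (N j k s : ℝ)
      = (∑ j ∈ I, d j ^ 2) * if s ∈ I then d s else 0 := by
  by_cases hs : s ∈ I
  · rw [if_pos hs, sum_mul]
    refine sum_congr rfl fun j hj => ?_
    calc ∑ k ∈ I, d j * d k * (N j k s : ℝ) = d j * ∑ k ∈ I, d k * (N j k s : ℝ) := by
          rw [mul_sum]; simp_rw [mul_assoc]
      _ = d j ^ 2 * d s := by
          rw [sum_dim_mul_fusion_of_closed hσI hcl hfrob hdσ hdmul hj hs, ← mul_assoc, sq]
  · rw [if_neg hs, mul_zero]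
    exact sum_eq_zero fun j hj => sum_eq_zero fun k hk => by
      simp [not_ne_iff.mp fun h => hs (hcl j hj k hk s h)]

end Closed

theorem fusion_eq_zero_of_sum_sum_eq_zero {lam : ι → ℝ} (hnn : ∀ j, 0 ≤ lam j) {s : ι}
    (hsum : ∑ j, ∑ k, lam j * lam k * (N j k s : ℝ) = 0) {j k : ι}
    (hj : lam j ≠ 0) (hk : lam k ≠ 0) : N j k s = 0 := by
  have hterm : ∀ a b, 0 ≤ lam a * lam b * (N a b s : ℝ) := fun a b =>
    mul_nonneg (mul_nonneg (hnn a) (hnn b)) (Nat.cast_nonneg _)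
  have hrow := (Fintype.sum_eq_zero_iff_of_nonneg fun a => sum_nonneg fun b _ => hterm a b).mp hsum
  have hjk := (Fintype.sum_eq_zero_iff_of_nonneg (hterm j)).mp (congrFun hrow j)
  simpa [hj, hk] using congrFun hjk k

end FusionRing

theorem Complex.ofReal_eq_zero_iff_of_eq_mul {a b : ℝ} {c : ℂ} (hc : c ≠ 0)
    (h : (a : ℂ) = c * b) : a = 0 ↔ b = 0 := by
  rw [← Complex.ofReal_eq_zero, h, mul_eq_zero, or_iff_right hc, Complex.ofReal_eq_zero]

theorem biprojection_fusion_subring_correspondence_general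
    (m : ℕ) (hm : 0 < m)
    (N : Fin m → Fin m → Fin m → ℕ)
    (σ : Fin m → Fin m) (hσ : ∀ j, σ (σ j) = j)
    (hfrob : ∀ j k s, N j k s = N (σ j) s k)
    (d : Fin m → ℝ) (hd1 : ∀ j, 1 ≤ d j) (hdσ : ∀ j, d (σ j) = d j)
    (hdmul : ∀ j k, d j * d k = ∑ s, (N j k s : ℝ) * d s) :
    (∀ I : Finset (Fin m), (⟨0, hm⟩ : Fin m) ∈ I →
      (∀ j ∈ I, σ j ∈ I) →
      (∀ j ∈ I, ∀ k ∈ I, ∀ s, N j k s ≠ 0 → s ∈ I) →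
      ((∀ s, (s ∈ I ↔ σ s ∈ I)) ∧
       (∀ s, (∑ j ∈ I, ∑ k ∈ I, d j * d k * (N j k s : ℝ))
          = (∑ j ∈ I, d j ^ 2) * (if s ∈ I then d s else 0)))) ∧
    (∀ (lam : Fin m → ℝ) (μ : ℂ), μ ≠ 0 →
      (∀ j, lam j = 0 ∨ lam j = d j) →
      (∀ s, ((∑ j, ∑ k, lam j * lam k * (N j k s : ℝ) : ℝ) : ℂ) = μ * (lam s : ℂ)) →
      (∀ s, ((lam (σ s) : ℝ) : ℂ) = (starRingEnd ℂ μ / μ) * (lam s : ℂ)) →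
      ((∀ j, lam j ≠ 0 ↔ lam (σ j) ≠ 0) ∧
       (∀ j k s, lam j ≠ 0 → lam k ≠ 0 → lam s = 0 → N j k s = 0))) := by
  refine ⟨fun I _ hσI hcl => ⟨mem_iff_apply_mem_of_involutive hσ hσI,
    sum_sum_dim_mul_fusion_of_closed hσI hcl hfrob hdσ hdmul⟩, ?_⟩
  intro lam μ hμ hlam hP2 hPstar
  have hnn : ∀ j, 0 ≤ lam j := fun j => (hlam j).elim (·.ge) fun h => h ▸ zero_le_one.trans (hd1 j)
  have hphase : starRingEnd ℂ μ / μ ≠ 0 := div_ne_zero ((map_ne_zero _).mpr hμ) hμ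
  refine ⟨fun j => (Complex.ofReal_eq_zero_iff_of_eq_mul hphase (hPstar j)).not.symm, ?_⟩
  intro j k s hj hk hs
  have hsum : ∑ a, ∑ b, lam a * lam b * (N a b s : ℝ) = 0 :=
    Complex.ofReal_eq_zero.mp ((hP2 s).trans (by rw [hs, Complex.ofReal_zero, mul_zero]))
  exact fusion_eq_zero_of_sum_sum_eq_zero hnn hsum hj hk

/-- biprojections ↔ fusion subrings: for a fusion ring,
(1) if `I` is a subset of basis indices containing `1`, closed under the involution
and under fusion, then `B̂ = Σ_{j∈I} d_j x_j` satisfies `B̂² = μ_I B̂` with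
`μ_I = Σ_{j∈I} d_j²` (and `B̂* = B̂`, i.e. `I` is `*`-invariant);
(2) conversely, if `P = Σ_j λ_j x_j` with each `λ_j ∈ {0, d_j}` satisfies
`P² = λ P` and `P* = (λ̄/λ) P` for some `λ ≠ 0`, then `I = {j : λ_j ≠ 0}` is closed
under the involution and `N_{j,k}^s = 0` whenever `j, k ∈ I`, `s ∉ I`. -/
theorem biprojection_fusion_subring_correspondence
    (m : ℕ) (hm : 0 < m)
    (N : Fin m → Fin m → Fin m → ℕ)
    (σ : Fin m → Fin m) (hσ : ∀ j, σ (σ j) = j)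
    (hunit : ∀ k s, N ⟨0, hm⟩ k s = if k = s then 1 else 0)
    (hunit' : ∀ j s, N j ⟨0, hm⟩ s = if j = s then 1 else 0)
    (hdual : ∀ j k, N j k ⟨0, hm⟩ = if j = σ k then 1 else 0)
    (hassoc : ∀ j k l s, ∑ t, N j k t * N t l s = ∑ t, N k l t * N j t s)
    (hfrob : ∀ j k s, N j k s = N (σ j) s k)
    (hfrob' : ∀ j k s, N j k s = N s (σ k) j)
    (d : Fin m → ℝ) (hd1 : ∀ j, 1 ≤ d j) (hdσ : ∀ j, d (σ j) = d j)
    (hdmul : ∀ j k, d j * d k = ∑ s, (N j k s : ℝ) * d s) :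
    (∀ I : Finset (Fin m), (⟨0, hm⟩ : Fin m) ∈ I →
      (∀ j ∈ I, σ j ∈ I) →
      (∀ j ∈ I, ∀ k ∈ I, ∀ s, N j k s ≠ 0 → s ∈ I) →
      ((∀ s, (s ∈ I ↔ σ s ∈ I)) ∧
       (∀ s, (∑ j ∈ I, ∑ k ∈ I, d j * d k * (N j k s : ℝ))
          = (∑ j ∈ I, d j ^ 2) * (if s ∈ I then d s else 0)))) ∧
    (∀ (lam : Fin m → ℝ) (μ : ℂ), μ ≠ 0 →
      (∀ j, lam j = 0 ∨ lam j = d j) →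
      (∀ s, ((∑ j, ∑ k, lam j * lam k * (N j k s : ℝ) : ℝ) : ℂ) = μ * (lam s : ℂ)) →
      (∀ s, ((lam (σ s) : ℝ) : ℂ) = (starRingEnd ℂ μ / μ) * (lam s : ℂ)) →
      ((∀ j, lam j ≠ 0 ↔ lam (σ j) ≠ 0) ∧
       (∀ j k s, lam j ≠ 0 → lam k ≠ 0 → lam s = 0 → N j k s = 0))) :=
  biprojection_fusion_subring_correspondence_general m hm N σ hσ hfrob d hd1 hdσ hdmul
end

section
/- Let (λ_{i,j}) be the character table of a commutative fusion ring A: λ_{i,j} = π_j(x_i) where π_1, ..., π_m are the algebra homomorphisms A → ℂ and π_1 = d. If A is the Grothendieck ring of a unitary fusion category (or more generally if the Schur product property holds on the dual), then for every triple of column indices (j_1, j_2, j_3): Σ_{i=1}^m λ_{i,j_1} λ_{i,j_2} λ_{i,j_3} / λ_{i,1} ≥ 0, where λ_{i,1} = d(x_i) > 0. -/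
/-!
Evaluating the quadratic forms of the fusion matrices at a joint eigenvector `v j` gives
`u* M_i u = χ j i · ‖v j‖²`. Feeding three such eigenvectors into the Schur product property
yields `‖v j₁‖² ‖v j₂‖² ‖v j₃‖² · Σ_i χ j₁ i χ j₂ i χ j₃ i / d i ≥ 0`, and the positive scalar
factor can be cancelled.
-/

open scoped ComplexOrder Matrix

namespace Matrix

variable {n R : Type*} [Fintype n] [CommSemiring R] [StarRing R]

lemma sum_sum_star_mul_mul_eq_star_dotProduct_mulVec (A : Matrix n n R) (u : n → R) :
    ∑ a, ∑ b, starRingEnd R (u a) * A a b * u b = star u ⬝ᵥ (A *ᵥ u) := by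
  simp only [dotProduct, mulVec, Finset.mul_sum, Pi.star_apply, starRingEnd_apply, mul_assoc]

lemma sum_sum_star_mul_mul_eq_of_mulVec_eq_smul {A : Matrix n n R} {v : n → R} {μ : R}
    (h : A *ᵥ v = μ • v) :
    ∑ a, ∑ b, starRingEnd R (v a) * A a b * v b = μ * (star v ⬝ᵥ v) := by
  rw [sum_sum_star_mul_mul_eq_star_dotProduct_mulVec, h, dotProduct_smul, smul_eq_mul]

end Matrix

theorem commutative_schur_product_criterion_general
    (m : ℕ)
    (N : Fin m → Fin m → Fin m → ℕ)
    (d : Fin m → ℝ)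
    (χ : Fin m → Fin m → ℂ)
    (v : Fin m → (Fin m → ℂ)) (hv : ∀ j, v j ≠ 0)
    (heig : ∀ j i,
      (Matrix.of fun a b => ((N i a b : ℕ) : ℂ)).mulVec (v j) = χ j i • v j)
    (hSchur : ∀ u₁ u₂ u₃ : Fin m → ℂ,
      0 ≤ ∑ i, (1 / (d i : ℂ)) *
        (∑ a, ∑ b, (starRingEnd ℂ) (u₁ a) * (N i a b : ℂ) * u₁ b) *
        (∑ a, ∑ b, (starRingEnd ℂ) (u₂ a) * (N i a b : ℂ) * u₂ b) *
        (∑ a, ∑ b, (starRingEnd ℂ) (u₃ a) * (N i a b : ℂ) * u₃ b)) :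
    ∀ j₁ j₂ j₃ : Fin m,
      0 ≤ ∑ i, χ j₁ i * χ j₂ i * χ j₃ i / (d i : ℂ) := by
  intro j₁ j₂ j₃
  set c : Fin m → ℂ := fun j => star (v j) ⬝ᵥ v j
  have hc : ∀ j, 0 < c j := fun j => Matrix.dotProduct_star_self_pos_iff.2 (hv j)
  have hquad : ∀ j i, ∑ a, ∑ b, starRingEnd ℂ (v j a) * (N i a b : ℂ) * v j b = χ j i * c j :=
    fun j i => Matrix.sum_sum_star_mul_mul_eq_of_mulVec_eq_smul (heig j i)
  have hscale : ∑ i, 1 / (d i : ℂ) * (χ j₁ i * c j₁) * (χ j₂ i * c j₂) * (χ j₃ i * c j₃)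
      = c j₁ * c j₂ * c j₃ * ∑ i, χ j₁ i * χ j₂ i * χ j₃ i / (d i : ℂ) := by
    rw [Finset.mul_sum]
    exact Finset.sum_congr rfl fun i _ => by ring
  have hpos := hSchur (v j₁) (v j₂) (v j₃)
  simp only [hquad, hscale] at hpos
  exact le_of_mul_le_mul_left (by rwa [mul_zero]) (mul_pos (mul_pos (hc j₁) (hc j₂)) (hc j₃))

/-- Commutative Schur product criterion: let `(λ_{i,j}) = (χ j i)` be
the character table of a commutative fusion ring, with first column `χ 1 = d` the
Frobenius–Perron dimension. If the Schur product property holds on the dual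
(formulated, as in the paper, via the quadratic forms `u* M_i u` of the fusion
matrices `M_i = (N_{i,a}^b)`), then for every triple of columns `(j₁, j₂, j₃)`,
`Σ_i λ_{i,j₁} λ_{i,j₂} λ_{i,j₃} / λ_{i,1} ≥ 0`. -/
theorem commutative_schur_product_criterion
    (m : ℕ) (hm : 0 < m)
    (N : Fin m → Fin m → Fin m → ℕ)
    (d : Fin m → ℝ) (hd1 : ∀ i, 1 ≤ d i)
    (hdmul : ∀ i i', d i * d i' = ∑ s, (N i i' s : ℝ) * d s)
    (χ : Fin m → Fin m → ℂ)
    (hχd : ∀ i, χ ⟨0, hm⟩ i = (d i : ℂ))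
    (hχmul : ∀ j i i', χ j i * χ j i' = ∑ s, (N i i' s : ℂ) * χ j s)
    (v : Fin m → (Fin m → ℂ)) (hv : ∀ j, v j ≠ 0)
    (heig : ∀ j i,
      (Matrix.of fun a b => ((N i a b : ℕ) : ℂ)).mulVec (v j) = χ j i • v j)
    (hSchur : ∀ u₁ u₂ u₃ : Fin m → ℂ,
      0 ≤ ∑ i, (1 / (d i : ℂ)) *
        (∑ a, ∑ b, (starRingEnd ℂ) (u₁ a) * (N i a b : ℂ) * u₁ b) *
        (∑ a, ∑ b, (starRingEnd ℂ) (u₂ a) * (N i a b : ℂ) * u₂ b) *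
        (∑ a, ∑ b, (starRingEnd ℂ) (u₃ a) * (N i a b : ℂ) * u₃ b)) :
    ∀ j₁ j₂ j₃ : Fin m,
      0 ≤ ∑ i, χ j₁ i * χ j₂ i * χ j₃ i / (d i : ℂ) :=
  commutative_schur_product_criterion_general m N d χ v hv heig hSchur
end

section
/- Consider the rank-3 fusion algebra with self-adjoint basis {x_1=1, x_2, x_3}, parameters d_2, d_3 ≥ 1, 0 ≤ a ≤ 1, b = 1-a, with fusion rules x_2 x_2 = x_1 + ((d_2^2-1-a d_3^2)/d_2) x_2 + a d_3 x_3, x_2 x_3 = a d_3 x_2 + b d_2 x_3, x_3 x_3 = x_1 + b d_2 x_2 + ((d_3^2-1-b d_2^2)/d_3) x_3. With parameters d_2 = 1000, d_3 = 500, a = 0.750001, the Schur product property fails on the dual: there exists a minimal idempotent Q of the algebra (a character projection) such that the sum Σ_i χ(x_i)^3 / d(x_i) < 0, where χ is the associated character. Hence this fusion bialgebra admits no subfactorization. -/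
/-!
The characters of the rank-3 fusion algebra are `χ = (1, -λ/d₂, -(1-λ)/d₃)` with `λ` a root of
`λ² - (a d₃² - b d₂² + 1) λ - b d₂² = 0`; the shape of `χ` is forced by orthogonality to the
dimension character `d = (1, d₂, d₃)`. The smaller root always satisfies
`λ < a d₃² - b d₂² + 1`, which is `-62497.75` here. With `u = -λ`, the Schur sum is
`1 + u³/d₂⁴ - (1+u)³/d₃⁴ ≤ 1 - u³ (1/d₃⁴ - 1/d₂⁴)`, which is negative already for `u > 4100`.
-/

theorem exists_quadratic_root_lt (c : ℝ) {p : ℝ} (hp : 0 < p) :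
    ∃ ℓ : ℝ, ℓ ^ 2 - c * ℓ - p = 0 ∧ ℓ < c := by
  set s := √(c ^ 2 + 4 * p)
  have hs : s ^ 2 = c ^ 2 + 4 * p := Real.sq_sqrt (by positivity)
  have hcs : -c < s := by nlinarith [Real.sqrt_nonneg (c ^ 2 + 4 * p)]
  exact ⟨(c - s) / 2, by linear_combination hs / 4, by linarith⟩

namespace Rank3FusionAlgebra

def IsCharacter (d₂ d₃ a : ℝ) (χ : Fin 3 → ℝ) : Prop :=
  χ 0 = 1 ∧
    χ 1 * χ 1 = 1 + ((d₂ ^ 2 - 1 - a * d₃ ^ 2) / d₂) * χ 1 + (a * d₃) * χ 2 ∧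
    χ 1 * χ 2 = (a * d₃) * χ 1 + ((1 - a) * d₂) * χ 2 ∧
    χ 2 * χ 2 = 1 + ((1 - a) * d₂) * χ 1 + ((d₃ ^ 2 - 1 - (1 - a) * d₂ ^ 2) / d₃) * χ 2

noncomputable def character (d₂ d₃ ℓ : ℝ) : Fin 3 → ℝ := ![1, -ℓ / d₂, -(1 - ℓ) / d₃]

theorem isCharacter_character {d₂ d₃ a ℓ : ℝ} (hd₂ : d₂ ≠ 0) (hd₃ : d₃ ≠ 0)
    (hℓ : ℓ ^ 2 - (a * d₃ ^ 2 - (1 - a) * d₂ ^ 2 + 1) * ℓ - (1 - a) * d₂ ^ 2 = 0) :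
    IsCharacter d₂ d₃ a (character d₂ d₃ ℓ) := by
  simp only [IsCharacter, character, Matrix.cons_val_zero, Matrix.cons_val_one,
    Matrix.cons_val_two, Matrix.head_cons, Matrix.tail_cons]
  refine ⟨trivial, ?_, ?_, ?_⟩ <;> field_simp
  · linear_combination hℓ
  · linear_combination -hℓ
  · linear_combination hℓ

noncomputable def schurSum (d χ : Fin 3 → ℝ) : ℝ := ∑ i, χ i ^ 3 / d i

theorem schurSum_character_neg {d₂ d₃ ℓ : ℝ} (hd₃ : 0 < d₃) (hℓ : ℓ ≤ 0)
    (h : 1 < (-ℓ) ^ 3 * (1 / d₃ ^ 4 - 1 / d₂ ^ 4)) :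
    schurSum ![1, d₂, d₃] (character d₂ d₃ ℓ) < 0 := by
  have hcube : (-ℓ) ^ 3 ≤ (1 - ℓ) ^ 3 := pow_le_pow_left₀ (by linarith) (by linarith) 3
  calc schurSum ![1, d₂, d₃] (character d₂ d₃ ℓ)
      = 1 + (-ℓ) ^ 3 / d₂ ^ 4 - (1 - ℓ) ^ 3 / d₃ ^ 4 := by
        simp only [schurSum, character, Fin.sum_univ_three, Matrix.cons_val_zero,
          Matrix.cons_val_one, Matrix.cons_val_two, Matrix.head_cons, Matrix.tail_cons]
        ring
    _ ≤ 1 + (-ℓ) ^ 3 / d₂ ^ 4 - (-ℓ) ^ 3 / d₃ ^ 4 := by gcongr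
    _ = 1 - (-ℓ) ^ 3 * (1 / d₃ ^ 4 - 1 / d₂ ^ 4) := by ring
    _ < 0 := by linarith

end Rank3FusionAlgebra

open Rank3FusionAlgebra in
/-- for the rank-3 self-adjoint fusion algebra with parameters
`d₂ = 1000`, `d₃ = 500`, `a = 0.750001`, `b = 1 - a`, the Schur product property
fails on the dual: there is a character `χ` (associated to a minimal idempotent,
a character projection) of the algebra such that `Σ_i χ(x_i)³ / d(x_i) < 0`.
Hence this fusion bialgebra admits no subfactorization. -/
theorem schur_product_counterexample :
    ∃ χ : Fin 3 → ℝ,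
      χ 0 = 1 ∧
      χ 1 * χ 1 = 1 + (((1000 : ℝ) ^ 2 - 1 - 0.750001 * (500 : ℝ) ^ 2) / 1000) * χ 1
        + (0.750001 * 500) * χ 2 ∧
      χ 1 * χ 2 = (0.750001 * 500) * χ 1 + ((1 - 0.750001) * 1000) * χ 2 ∧
      χ 2 * χ 2 = 1 + ((1 - 0.750001) * 1000) * χ 1
        + (((500 : ℝ) ^ 2 - 1 - (1 - 0.750001) * (1000 : ℝ) ^ 2) / 500) * χ 2 ∧
      χ 0 ^ 3 / 1 + χ 1 ^ 3 / 1000 + χ 2 ^ 3 / 500 < 0 := by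
  obtain ⟨ℓ, hroot, hℓ⟩ := exists_quadratic_root_lt
    (0.750001 * 500 ^ 2 - (1 - 0.750001) * 1000 ^ 2 + 1) (p := (1 - 0.750001) * 1000 ^ 2)
    (by norm_num)
  have hℓ_lt : ℓ < -62497 := by norm_num at hℓ; linarith
  have hcube : (62497 : ℝ) ^ 3 ≤ (-ℓ) ^ 3 := pow_le_pow_left₀ (by norm_num) (by linarith) 3
  obtain ⟨h₀, h₁, h₂, h₃⟩ := isCharacter_character (a := 0.750001)
    (by norm_num : (1000 : ℝ) ≠ 0) (by norm_num : (500 : ℝ) ≠ 0) hroot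
  have hschur : schurSum ![1, 1000, 500] (character 1000 500 ℓ) < 0 :=
    schurSum_character_neg (by norm_num) (by linarith) (by norm_num at hcube ⊢; linarith)
  exact ⟨_, h₀, h₁, h₂, h₃, by simpa [schurSum, Fin.sum_univ_three] using hschur⟩
end

section
/- Let Q_1, Q_2, Q_3 be the minimal idempotents of the commutative rank-3 fusion algebra with self-adjoint basis and parameters (d_2, d_3, a) as in the rank-3 Type I classification. Then Q_1 = μ^{-1}(x_1 + d_2 x_2 + d_3 x_3) with μ = 1 + d_2² + d_3², and Q_k = ν_k^{-1}(x_1 - (λ_k/d_2) x_2 - ((1-λ_k)/d_3) x_3) for k = 2, 3, where λ_2, λ_3 are the two roots of λ² - (a d_3² - (1-a) d_2² + 1)λ - (1-a) d_2² = 0 and ν_k = 1 + λ_k²/d_2² + (1-λ_k)²/d_3². These satisfy Q_j Q_k = δ_{jk} Q_j and Q_1 + Q_2 + Q_3 = 1. -/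
/-!
Each `Qₖ` is `νₖ⁻¹ Σᵢ χₖ(xᵢ) xᵢ` for a character `χₖ` of the fusion rules: `χ₁(x₂, x₃) = (d₂, d₃)`
and `χₖ(x₂, x₃) = (-λₖ/d₂, -(1-λₖ)/d₃)`, the quadratic for `λₖ` being exactly the character
condition. By Frobenius reciprocity `Σᵢ χ(xᵢ) xᵢ` is an eigenvector of multiplication by each `xⱼ`
with eigenvalue `χ(xⱼ)`, so the product of two such elements is the pairing `Σᵢ χ(xᵢ) ψ(xᵢ)` times
one of them; this pairing is `ν` for `χ = ψ` and `0` for distinct characters. Three nonzero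
orthogonal idempotents of a three-dimensional algebra form a basis, and expanding `1` in it shows
that they sum to `1`.
-/

open Module

section OrthogonalIdempotents

variable {K B ι : Type*} [Field K] [Ring B] [Algebra K B] [Fintype ι] {e : ι → B}

theorem OrthogonalIdempotents.mul_sum_smul (he : OrthogonalIdempotents e) (c : ι → K) (j : ι) :
    e j * ∑ i, c i • e i = c j • e j := by
  classical
  simp [Finset.mul_sum, he.mul_eq]

theorem OrthogonalIdempotents.linearIndependent (he : OrthogonalIdempotents e)
    (hne : ∀ i, e i ≠ 0) : LinearIndependent K e :=
  Fintype.linearIndependent_iff.mpr fun c hc j =>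
    (smul_eq_zero.mp (by rw [← he.mul_sum_smul, hc, mul_zero])).resolve_right (hne j)

theorem OrthogonalIdempotents.sum_eq_one_of_card_eq_finrank [FiniteDimensional K B]
    (he : OrthogonalIdempotents e) (hne : ∀ i, e i ≠ 0)
    (hcard : Fintype.card ι = finrank K B) : ∑ i, e i = 1 := by
  have hspan := (he.linearIndependent (K := K) hne).span_eq_top_of_card_eq_finrank' hcard
  obtain ⟨c, hc⟩ := (Submodule.mem_span_range_iff_exists_fun K).mp (hspan ▸ Submodule.mem_top)
  have hc_one (j : ι) : c j = 1 := by
    have hj : (c j - 1) • e j = 0 := by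
      rw [sub_smul, one_smul, ← he.mul_sum_smul, hc, mul_one, sub_self]
    exact sub_eq_zero.mp ((smul_eq_zero.mp hj).resolve_right (hne j))
  simpa [hc_one] using hc

end OrthogonalIdempotents

section RankThreeFusion

variable {B : Type*} [CommRing B] [Algebra ℝ B] {x y : B} {α β γ δ : ℝ}

/-- The multiplication table of a rank-three fusion algebra with self-adjoint basis `1, x, y`:
Frobenius reciprocity forces the structure constants into this shape. -/
def FusionRules (α β γ δ : ℝ) (x y : B) : Prop :=
  x * x = 1 + α • x + β • y ∧ x * y = β • x + γ • y ∧ y * y = 1 + γ • x + δ • y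

/-- `(s, t) = (χ x, χ y)` for a character `χ` of `FusionRules α β γ δ x y`. -/
def IsFusionCharacter (α β γ δ s t : ℝ) : Prop :=
  s ^ 2 = 1 + α * s + β * t ∧ s * t = β * s + γ * t ∧ t ^ 2 = 1 + γ * s + δ * t

def charSum (x y : B) (s t : ℝ) : B := 1 + s • x + t • y

noncomputable def charIdempotent (x y : B) (s t : ℝ) : B :=
  (1 + s ^ 2 + t ^ 2)⁻¹ • charSum x y s t

theorem charIdempotent_neg_neg (x y : B) (s t : ℝ) :
    charIdempotent x y (-s) (-t) = (1 + s ^ 2 + t ^ 2)⁻¹ • (1 - s • x - t • y) := by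
  rw [charIdempotent, charSum, neg_sq, neg_sq, neg_smul, neg_smul, ← sub_eq_add_neg,
    ← sub_eq_add_neg]

theorem charSum_ne_zero (hli : LinearIndependent ℝ ![1, x, y]) (s t : ℝ) :
    charSum x y s t ≠ 0 := by
  intro h
  have := Fintype.linearIndependent_iff.mp hli ![1, s, t]
    (by simpa [Fin.sum_univ_three, charSum] using h) 0
  simp at this

theorem charIdempotent_ne_zero (hli : LinearIndependent ℝ ![1, x, y]) (s t : ℝ) :
    charIdempotent x y s t ≠ 0 :=
  smul_ne_zero (inv_ne_zero (by positivity)) (charSum_ne_zero hli s t)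

theorem FusionRules.charSum_mul_charSum (h : FusionRules α β γ δ x y) {s t : ℝ}
    (hχ : IsFusionCharacter α β γ δ s t) (s' t' : ℝ) :
    charSum x y s' t' * charSum x y s t = (1 + s' * s + t' * t) • charSum x y s t := by
  obtain ⟨hxx, hxy, hyy⟩ := h
  obtain ⟨hss, hst, htt⟩ := hχ
  have hx : x * charSum x y s t = s • charSum x y s t := by
    simp only [charSum, mul_add, mul_one, mul_smul_comm, hxx, hxy]
    match_scalars <;> linarith
  have hy : y * charSum x y s t = t • charSum x y s t := by
    simp only [charSum, mul_add, mul_one, mul_smul_comm, mul_comm y x, hyy, hxy]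
    match_scalars <;> linarith
  calc charSum x y s' t' * charSum x y s t
      = charSum x y s t + s' • (x * charSum x y s t) + t' • (y * charSum x y s t) := by
        simp only [charSum, add_mul, one_mul, smul_mul_assoc]
    _ = (1 + s' * s + t' * t) • charSum x y s t := by
        rw [hx, hy]; module

theorem FusionRules.isIdempotentElem_charIdempotent (h : FusionRules α β γ δ x y) {s t : ℝ}
    (hχ : IsFusionCharacter α β γ δ s t) : IsIdempotentElem (charIdempotent x y s t) := by
  have hν : 1 + s ^ 2 + t ^ 2 ≠ 0 := by positivity
  rw [IsIdempotentElem, charIdempotent, smul_mul_smul_comm, h.charSum_mul_charSum hχ, smul_smul,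
    ← sq, ← sq]
  congr 1
  field_simp

theorem FusionRules.charIdempotent_mul_charIdempotent_eq_zero (h : FusionRules α β γ δ x y)
    {s t s' t' : ℝ} (hχ : IsFusionCharacter α β γ δ s t) (horth : 1 + s' * s + t' * t = 0) :
    charIdempotent x y s' t' * charIdempotent x y s t = 0 := by
  rw [charIdempotent, charIdempotent, smul_mul_smul_comm, h.charSum_mul_charSum hχ, horth,
    zero_smul, smul_zero]

theorem FusionRules.orthogonalIdempotents_charIdempotent (h : FusionRules α β γ δ x y)
    {ι : Type*} {s t : ι → ℝ} (hχ : ∀ i, IsFusionCharacter α β γ δ (s i) (t i))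
    (horth : Pairwise fun i j => 1 + s i * s j + t i * t j = 0) :
    OrthogonalIdempotents fun i => charIdempotent x y (s i) (t i) :=
  ⟨fun i => h.isIdempotentElem_charIdempotent (hχ i),
    fun _ _ hij => h.charIdempotent_mul_charIdempotent_eq_zero (hχ _) (horth hij)⟩

end RankThreeFusion

section TypeI

variable {d2 d3 a : ℝ}

theorem isFusionCharacter_typeI_dims (hd2 : d2 ≠ 0) (hd3 : d3 ≠ 0) :
    IsFusionCharacter ((d2 ^ 2 - 1 - a * d3 ^ 2) / d2) (a * d3) ((1 - a) * d2)
      ((d3 ^ 2 - 1 - (1 - a) * d2 ^ 2) / d3) d2 d3 := by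
  refine ⟨?_, ?_, ?_⟩ <;> field_simp <;> ring

theorem isFusionCharacter_typeI_of_root (hd2 : d2 ≠ 0) (hd3 : d3 ≠ 0) {lam : ℝ}
    (hlam : lam ^ 2 = (a * d3 ^ 2 - (1 - a) * d2 ^ 2 + 1) * lam + (1 - a) * d2 ^ 2) :
    IsFusionCharacter ((d2 ^ 2 - 1 - a * d3 ^ 2) / d2) (a * d3) ((1 - a) * d2)
      ((d3 ^ 2 - 1 - (1 - a) * d2 ^ 2) / d3) (-(lam / d2)) (-((1 - lam) / d3)) := by
  refine ⟨?_, ?_, ?_⟩ <;> field_simp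
  exacts [by linear_combination hlam, by linear_combination -hlam, by linear_combination hlam]

theorem typeI_pairing_dims_root_eq_zero (hd2 : d2 ≠ 0) (hd3 : d3 ≠ 0) (lam : ℝ) :
    1 + d2 * -(lam / d2) + d3 * -((1 - lam) / d3) = 0 := by
  field_simp; ring

theorem typeI_pairing_roots_eq_zero (hd2 : d2 ≠ 0) (hd3 : d3 ≠ 0) {lam lam' : ℝ}
    (hsum : lam + lam' = a * d3 ^ 2 - (1 - a) * d2 ^ 2 + 1)
    (hprod : lam * lam' = -((1 - a) * d2 ^ 2)) :
    1 + -(lam / d2) * -(lam' / d2) + -((1 - lam) / d3) * -((1 - lam') / d3) = 0 := by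
  field_simp
  linear_combination (d2 ^ 2 + d3 ^ 2) * hprod - d2 ^ 2 * hsum

theorem FusionRules.orthogonalIdempotents_typeI {B : Type*} [CommRing B] [Algebra ℝ B]
    {x y : B} (h : FusionRules ((d2 ^ 2 - 1 - a * d3 ^ 2) / d2) (a * d3) ((1 - a) * d2)
      ((d3 ^ 2 - 1 - (1 - a) * d2 ^ 2) / d3) x y) (hd2 : d2 ≠ 0) (hd3 : d3 ≠ 0) {lam2 lam3 : ℝ}
    (hsum : lam2 + lam3 = a * d3 ^ 2 - (1 - a) * d2 ^ 2 + 1)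
    (hprod : lam2 * lam3 = -((1 - a) * d2 ^ 2)) :
    OrthogonalIdempotents ![charIdempotent x y d2 d3,
      charIdempotent x y (-(lam2 / d2)) (-((1 - lam2) / d3)),
      charIdempotent x y (-(lam3 / d2)) (-((1 - lam3) / d3))] := by
  have hroot2 : lam2 ^ 2 = (a * d3 ^ 2 - (1 - a) * d2 ^ 2 + 1) * lam2 + (1 - a) * d2 ^ 2 := by
    linear_combination lam2 * hsum - hprod
  have hroot3 : lam3 ^ 2 = (a * d3 ^ 2 - (1 - a) * d2 ^ 2 + 1) * lam3 + (1 - a) * d2 ^ 2 := by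
    linear_combination lam3 * hsum - hprod
  have h23 := typeI_pairing_roots_eq_zero hd2 hd3 hsum hprod
  have h1k := typeI_pairing_dims_root_eq_zero hd2 hd3
  convert h.orthogonalIdempotents_charIdempotent (s := ![d2, -(lam2 / d2), -(lam3 / d2)])
    (t := ![d3, -((1 - lam2) / d3), -((1 - lam3) / d3)]) ?_ ?_ using 1
  · funext i; fin_cases i <;> rfl
  · intro i
    fin_cases i
    exacts [isFusionCharacter_typeI_dims hd2 hd3, isFusionCharacter_typeI_of_root hd2 hd3 hroot2,
      isFusionCharacter_typeI_of_root hd2 hd3 hroot3]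
  · intro i j hij
    fin_cases i <;> fin_cases j
    all_goals first
      | exact absurd rfl hij
      | simp only [Fin.zero_eta, Fin.mk_one, Fin.reduceFinMk, Matrix.cons_val_zero,
          Matrix.cons_val_one, Matrix.cons_val_two, Matrix.head_cons, Matrix.tail_cons]
        linarith [h1k lam2, h1k lam3]

end TypeI

theorem rank_three_minimal_idempotents_general
    (B : Type*) [CommRing B] [Algebra ℝ B]
    (b : Module.Basis (Fin 3) ℝ B) (hone : b 0 = 1)
    (d2 d3 a : ℝ) (hd2 : 1 ≤ d2) (hd3 : 1 ≤ d3)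
    (hmul11 : b 1 * b 1 = b 0 + ((d2 ^ 2 - 1 - a * d3 ^ 2) / d2) • b 1
        + (a * d3) • b 2)
    (hmul12 : b 1 * b 2 = (a * d3) • b 1 + ((1 - a) * d2) • b 2)
    (hmul22 : b 2 * b 2 = b 0 + ((1 - a) * d2) • b 1
        + ((d3 ^ 2 - 1 - (1 - a) * d2 ^ 2) / d3) • b 2)
    (lam2 lam3 : ℝ)
    (hlamsum : lam2 + lam3 = a * d3 ^ 2 - (1 - a) * d2 ^ 2 + 1)
    (hlamprod : lam2 * lam3 = -((1 - a) * d2 ^ 2)) :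
    (∀ j k : Fin 3,
      (![(1 + d2 ^ 2 + d3 ^ 2)⁻¹ • (b 0 + d2 • b 1 + d3 • b 2),
         (1 + lam2 ^ 2 / d2 ^ 2 + (1 - lam2) ^ 2 / d3 ^ 2)⁻¹ •
           (b 0 - (lam2 / d2) • b 1 - ((1 - lam2) / d3) • b 2),
         (1 + lam3 ^ 2 / d2 ^ 2 + (1 - lam3) ^ 2 / d3 ^ 2)⁻¹ •
           (b 0 - (lam3 / d2) • b 1 - ((1 - lam3) / d3) • b 2)] : Fin 3 → B) j *
      (![(1 + d2 ^ 2 + d3 ^ 2)⁻¹ • (b 0 + d2 • b 1 + d3 • b 2),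
         (1 + lam2 ^ 2 / d2 ^ 2 + (1 - lam2) ^ 2 / d3 ^ 2)⁻¹ •
           (b 0 - (lam2 / d2) • b 1 - ((1 - lam2) / d3) • b 2),
         (1 + lam3 ^ 2 / d2 ^ 2 + (1 - lam3) ^ 2 / d3 ^ 2)⁻¹ •
           (b 0 - (lam3 / d2) • b 1 - ((1 - lam3) / d3) • b 2)] : Fin 3 → B) k
      = if j = k then
          (![(1 + d2 ^ 2 + d3 ^ 2)⁻¹ • (b 0 + d2 • b 1 + d3 • b 2),
             (1 + lam2 ^ 2 / d2 ^ 2 + (1 - lam2) ^ 2 / d3 ^ 2)⁻¹ •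
               (b 0 - (lam2 / d2) • b 1 - ((1 - lam2) / d3) • b 2),
             (1 + lam3 ^ 2 / d2 ^ 2 + (1 - lam3) ^ 2 / d3 ^ 2)⁻¹ •
               (b 0 - (lam3 / d2) • b 1 - ((1 - lam3) / d3) • b 2)] : Fin 3 → B) j
        else 0) ∧
    ((1 + d2 ^ 2 + d3 ^ 2)⁻¹ • (b 0 + d2 • b 1 + d3 • b 2)
      + (1 + lam2 ^ 2 / d2 ^ 2 + (1 - lam2) ^ 2 / d3 ^ 2)⁻¹ •
          (b 0 - (lam2 / d2) • b 1 - ((1 - lam2) / d3) • b 2)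
      + (1 + lam3 ^ 2 / d2 ^ 2 + (1 - lam3) ^ 2 / d3 ^ 2)⁻¹ •
          (b 0 - (lam3 / d2) • b 1 - ((1 - lam3) / d3) • b 2)
      = 1) := by
  have hd2' : d2 ≠ 0 := by positivity
  have hd3' : d3 ≠ 0 := by positivity
  have hli : LinearIndependent ℝ ![1, b 1, b 2] := by
    rw [← hone]; convert b.linearIndependent; funext i; fin_cases i <;> rfl
  have := b.finiteDimensional_of_finite
  rw [hone] at hmul11 hmul22 ⊢
  simp only [← div_pow]
  rw [← charIdempotent_neg_neg, ← charIdempotent_neg_neg]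
  have he := FusionRules.orthogonalIdempotents_typeI ⟨hmul11, hmul12, hmul22⟩ hd2' hd3'
    hlamsum hlamprod
  refine ⟨he.mul_eq, ?_⟩
  have hsum := he.sum_eq_one_of_card_eq_finrank
    (fun i => by fin_cases i <;> exact charIdempotent_ne_zero hli _ _)
    (by rw [finrank_eq_card_basis b])
  rwa [Fin.sum_univ_three] at hsum

/-- the minimal idempotents of the commutative rank-3 type-I fusion
algebra with parameters `(d₂, d₃, a)`. With `λ₂, λ₃` the two roots of
`λ² - (a d₃² - (1-a) d₂² + 1) λ - (1-a) d₂² = 0` and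
`ν_k = 1 + λ_k²/d₂² + (1-λ_k)²/d₃²`, the elements
`Q₁ = μ⁻¹ (x₁ + d₂ x₂ + d₃ x₃)` (with `μ = 1 + d₂² + d₃²`) and
`Q_k = ν_k⁻¹ (x₁ - (λ_k/d₂) x₂ - ((1-λ_k)/d₃) x₃)` for `k = 2, 3` satisfy
`Q_j Q_k = δ_{jk} Q_j` and `Q₁ + Q₂ + Q₃ = 1`. -/
theorem rank_three_minimal_idempotents
    (B : Type*) [CommRing B] [Algebra ℝ B]
    (b : Module.Basis (Fin 3) ℝ B) (hone : b 0 = 1)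
    (d2 d3 a : ℝ) (hd2 : 1 ≤ d2) (hd3 : 1 ≤ d3)
    (ha0 : 0 ≤ a) (ha1 : a ≤ 1)
    (hc1 : 0 ≤ d2 ^ 2 - 1 - a * d3 ^ 2)
    (hc2 : 0 ≤ d3 ^ 2 - 1 - (1 - a) * d2 ^ 2)
    (hmul11 : b 1 * b 1 = b 0 + ((d2 ^ 2 - 1 - a * d3 ^ 2) / d2) • b 1
        + (a * d3) • b 2)
    (hmul12 : b 1 * b 2 = (a * d3) • b 1 + ((1 - a) * d2) • b 2)
    (hmul22 : b 2 * b 2 = b 0 + ((1 - a) * d2) • b 1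
        + ((d3 ^ 2 - 1 - (1 - a) * d2 ^ 2) / d3) • b 2)
    (lam2 lam3 : ℝ) (hlamne : lam2 ≠ lam3)
    (hlamsum : lam2 + lam3 = a * d3 ^ 2 - (1 - a) * d2 ^ 2 + 1)
    (hlamprod : lam2 * lam3 = -((1 - a) * d2 ^ 2)) :
    (∀ j k : Fin 3,
      (![(1 + d2 ^ 2 + d3 ^ 2)⁻¹ • (b 0 + d2 • b 1 + d3 • b 2),
         (1 + lam2 ^ 2 / d2 ^ 2 + (1 - lam2) ^ 2 / d3 ^ 2)⁻¹ •
           (b 0 - (lam2 / d2) • b 1 - ((1 - lam2) / d3) • b 2),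
         (1 + lam3 ^ 2 / d2 ^ 2 + (1 - lam3) ^ 2 / d3 ^ 2)⁻¹ •
           (b 0 - (lam3 / d2) • b 1 - ((1 - lam3) / d3) • b 2)] : Fin 3 → B) j *
      (![(1 + d2 ^ 2 + d3 ^ 2)⁻¹ • (b 0 + d2 • b 1 + d3 • b 2),
         (1 + lam2 ^ 2 / d2 ^ 2 + (1 - lam2) ^ 2 / d3 ^ 2)⁻¹ •
           (b 0 - (lam2 / d2) • b 1 - ((1 - lam2) / d3) • b 2),
         (1 + lam3 ^ 2 / d2 ^ 2 + (1 - lam3) ^ 2 / d3 ^ 2)⁻¹ •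
           (b 0 - (lam3 / d2) • b 1 - ((1 - lam3) / d3) • b 2)] : Fin 3 → B) k
      = if j = k then
          (![(1 + d2 ^ 2 + d3 ^ 2)⁻¹ • (b 0 + d2 • b 1 + d3 • b 2),
             (1 + lam2 ^ 2 / d2 ^ 2 + (1 - lam2) ^ 2 / d3 ^ 2)⁻¹ •
               (b 0 - (lam2 / d2) • b 1 - ((1 - lam2) / d3) • b 2),
             (1 + lam3 ^ 2 / d2 ^ 2 + (1 - lam3) ^ 2 / d3 ^ 2)⁻¹ •
               (b 0 - (lam3 / d2) • b 1 - ((1 - lam3) / d3) • b 2)] : Fin 3 → B) j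
        else 0) ∧
    ((1 + d2 ^ 2 + d3 ^ 2)⁻¹ • (b 0 + d2 • b 1 + d3 • b 2)
      + (1 + lam2 ^ 2 / d2 ^ 2 + (1 - lam2) ^ 2 / d3 ^ 2)⁻¹ •
          (b 0 - (lam2 / d2) • b 1 - ((1 - lam2) / d3) • b 2)
      + (1 + lam3 ^ 2 / d2 ^ 2 + (1 - lam3) ^ 2 / d3 ^ 2)⁻¹ •
          (b 0 - (lam3 / d2) • b 1 - ((1 - lam3) / d3) • b 2)
      = 1) :=
  rank_three_minimal_idempotents_general B b hone d2 d3 a hd2 hd3 hmul11 hmul12 hmul22 lam2 lam3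
    hlamsum hlamprod
end

section
/- Let A be a fusion algebra realized as the ℂ-span of its basis with convolution x_j * x_k = Σ_s N_{j,k}^s x_s, p-norms ‖Σ λ_j x_j‖_{p} = (Σ_j |λ_j|^p d(x_j)^{2-p})^{1/p} for 1 ≤ p < ∞ and ‖Σ λ_j x_j‖_∞ = max_j |λ_j|/d(x_j). Then the Hausdorff–Young-type endpoint inequality holds: for x = Σ_j λ_j x_j, max_j |λ_j|/d(x_j) ≤ the trace-1-norm of Σ λ_j x_j in the fusion algebra B, i.e., |λ_k| / d(x_k) ≤ τ(|Σ_j λ_j x_j|) for every k, where τ is the canonical trace with τ(x_j) = δ_{j,1} and |y| = (y*y)^{1/2} in the finite-dimensional C*-algebra B. -/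
/-!
Write `x = ∑ λ_j x_j` as the matrix `M = ∑ λ_j L_j` of fusion matrices. The state
`τ(X) = X o o` at the unit index `o` is tracial on their span, and `λ_k = τ(M L_{σ k})`.
A matrix has finite spectrum, so the functional calculus of `M⋆M` applied to any function stays in
this closed star subalgebra; in particular the polar decomposition `M = V |M|` and `h = |M|^{1/2}`
do. Traciality turns `τ(V h h L_{σ k})` into `⟪h e_o, L_{σ k} V h e_o⟫`, which is at most
`‖L_{σ k}‖ ‖h e_o‖² = ‖L_{σ k}‖ τ(|M|)` because `‖V‖ ≤ 1`. The Schur test with the dimension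
vector `d` as weight gives `‖L_{σ k}‖ ≤ d_k`.
-/

open Matrix
open scoped ComplexOrder

namespace Matrix

lemma sq_norm_mulVec_apply_le {n : Type*} [Fintype n] (K : Matrix n n ℂ) {d : n → ℝ}
    (hd : ∀ i, 0 < d i) (w : n → ℂ) (s : n) :
    ‖(K *ᵥ w) s‖ ^ 2 ≤ (∑ t, ‖K s t‖ * d t) * ∑ t, ‖K s t‖ * (‖w t‖ ^ 2 / d t) := by
  have hK : ‖(K *ᵥ w) s‖ ≤ ∑ t, ‖K s t‖ * ‖w t‖ :=
    (norm_sum_le _ _).trans_eq (by simp only [norm_mul])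
  refine (pow_le_pow_left₀ (norm_nonneg _) hK 2).trans ?_
  refine Finset.sum_sq_le_sum_mul_sum_of_sq_le_mul _ (fun t _ => by have := hd t; positivity)
    (fun t _ => by have := hd t; positivity) fun t _ => le_of_eq ?_
  have := (hd t).ne'
  field_simp

variable {n : Type*} [Fintype n] [DecidableEq n]

theorem norm_toEuclideanCLM_le_of_schur (K : Matrix n n ℂ) {d : n → ℝ} (hd : ∀ i, 0 < d i)
    {r : ℝ} (hr : 0 ≤ r) (hrow : ∀ s, ∑ t, ‖K s t‖ * d t ≤ r * d s)
    (hcol : ∀ t, ∑ s, ‖K s t‖ * d s ≤ r * d t) :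
    ‖toEuclideanCLM (𝕜 := ℂ) K‖ ≤ r := by
  refine ContinuousLinearMap.opNorm_le_bound _ hr fun w => ?_
  refine pow_le_pow_iff_left₀ (norm_nonneg _) (by positivity) two_ne_zero |>.mp ?_
  simp only [EuclideanSpace.norm_sq_eq, mul_pow, ofLp_toEuclideanCLM]
  calc ∑ s, ‖(K *ᵥ w.ofLp) s‖ ^ 2
      ≤ ∑ s, r * d s * ∑ t, ‖K s t‖ * (‖w t‖ ^ 2 / d t) := by
        gcongr with s
        refine (sq_norm_mulVec_apply_le K hd _ s).trans ?_
        gcongr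
        · exact Finset.sum_nonneg fun t _ => by have := hd t; positivity
        · exact hrow s
    _ = r * ∑ t, ‖w t‖ ^ 2 / d t * ∑ s, ‖K s t‖ * d s := by
        simp only [Finset.mul_sum]
        rw [Finset.sum_comm]
        exact Finset.sum_congr rfl fun t _ => Finset.sum_congr rfl fun s _ => by ring
    _ ≤ r * ∑ t, ‖w t‖ ^ 2 / d t * (r * d t) := by
        gcongr with t
        · have := hd t; positivity
        · exact hcol t
    _ = r ^ 2 * ∑ t, ‖w t‖ ^ 2 := by
        simp only [Finset.mul_sum]
        refine Finset.sum_congr rfl fun t _ => ?_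
        have := (hd t).ne'
        field_simp

lemma IsHermitian.conj_diagonal_eq_cfc {A : Matrix n n ℂ} (hA : A.IsHermitian) (f : ℝ → ℝ) :
    (hA.eigenvectorUnitary : Matrix n n ℂ) * diagonal (((↑) : ℝ → ℂ) ∘ f ∘ hA.eigenvalues)
      * star (hA.eigenvectorUnitary : Matrix n n ℂ) = cfc f A := by
  rw [hA.cfc_eq, IsHermitian.cfc, Unitary.conjStarAlgAut_apply]
  rfl

open scoped MatrixOrder in
lemma nonneg_of_mem_spectrum_star_mul_self (M : Matrix n n ℂ) {t : ℝ}
    (ht : t ∈ spectrum ℝ (star M * M)) : 0 ≤ t :=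
  spectrum_nonneg_of_nonneg (star_mul_self_nonneg M) ht

lemma continuousOn_real_spectrum (A : Matrix n n ℂ) (f : ℝ → ℝ) :
    ContinuousOn f (spectrum ℝ A) :=
  A.finite_real_spectrum.continuousOn f

lemma cfc_mul' (A : Matrix n n ℂ) (f g : ℝ → ℝ) :
    cfc (fun t => f t * g t) A = cfc f A * cfc g A :=
  cfc_mul f g A (continuousOn_real_spectrum A f) (continuousOn_real_spectrum A g)

lemma mul_cfc_star_mul_self_eq_zero (M : Matrix n n ℂ) {f : ℝ → ℝ}
    (hf : ∀ t, 0 < t → f t = 0) : M * cfc f (star M * M) = 0 := by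
  set a := star M * M
  refine conjTranspose_mul_self_eq_zero.mp ?_
  calc (M * cfc f a)ᴴ * (M * cfc f a) = cfc f a * a * cfc f a := by
        rw [← star_eq_conjTranspose, star_mul, (cfc_predicate (p := IsSelfAdjoint) f a).star_eq]
        simp only [a, mul_assoc]
    _ = cfc (fun t => f t * t * f t) a := by rw [cfc_mul', cfc_mul', cfc_id' ℝ a]
    _ = cfc 0 a := cfc_congr fun t ht => by
        rcases (nonneg_of_mem_spectrum_star_mul_self M ht).eq_or_lt with rfl | ht
        · simp
        · simp [hf t ht]
    _ = 0 := cfc_zero ℝ a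

/-- The partial isometry `V` of the polar decomposition `M = V |M|`: since `0⁻¹ = 0`, the
functional calculus of `t ↦ (√t)⁻¹` is the Moore–Penrose inverse of `|M|`. -/
noncomputable def polarPart (M : Matrix n n ℂ) : Matrix n n ℂ :=
  M * cfc (fun t => (√t)⁻¹) (star M * M)

lemma polarPart_mul_cfc_sqrt (M : Matrix n n ℂ) :
    polarPart M * cfc Real.sqrt (star M * M) = M := by
  have h := mul_cfc_star_mul_self_eq_zero M (f := fun t => 1 - (√t)⁻¹ * √t) fun t ht => by
    simp [inv_mul_cancel₀ (Real.sqrt_pos.mpr ht).ne']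
  rwa [cfc_sub _ _ _ (continuousOn_real_spectrum _ _) (continuousOn_real_spectrum _ _),
    cfc_const_one ℝ _ (IsSelfAdjoint.star_mul_self M), cfc_mul', mul_sub, mul_one, sub_eq_zero,
    eq_comm, ← mul_assoc] at h

lemma isStarProjection_star_polarPart_mul_polarPart (M : Matrix n n ℂ) :
    IsStarProjection (star (polarPart M) * polarPart M) := by
  set a := star M * M
  have hsa : star (cfc (fun t => (√t)⁻¹) a) = cfc (fun t => (√t)⁻¹) a :=
    (cfc_predicate (p := IsSelfAdjoint) _ a).star_eq
  have hVV : star (polarPart M) * polarPart M = cfc (fun t => (√t)⁻¹ * t * (√t)⁻¹) a := by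
    rw [polarPart, star_mul, hsa, cfc_mul', cfc_mul', cfc_id' ℝ a]
    simp only [a, mul_assoc]
  rw [hVV]
  refine ⟨?_, cfc_predicate _ _⟩
  rw [IsIdempotentElem, ← cfc_mul']
  refine cfc_congr fun t ht => ?_
  rcases (nonneg_of_mem_spectrum_star_mul_self M ht).eq_or_lt with rfl | ht
  · simp
  · have hone : (√t)⁻¹ * t * (√t)⁻¹ = 1 := by
      have := Real.sqrt_pos.mpr ht
      field_simp
      exact (Real.sq_sqrt ht.le).symm
    rw [hone, one_mul]

lemma norm_toEuclideanCLM_polarPart_le_one (M : Matrix n n ℂ) :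
    ‖toEuclideanCLM (𝕜 := ℂ) (polarPart M)‖ ≤ 1 := by
  have h := ((isStarProjection_star_polarPart_mul_polarPart M).map
    (toEuclideanCLM (𝕜 := ℂ) (n := n))).norm_le
  rw [map_mul, map_star, ContinuousLinearMap.star_eq_adjoint, ContinuousLinearMap.mul_def,
    ContinuousLinearMap.norm_adjoint_comp_self] at h
  nlinarith [norm_nonneg (toEuclideanCLM (𝕜 := ℂ) (polarPart M))]

lemma inner_single_toEuclideanCLM_single (X : Matrix n n ℂ) (e : n) :
    inner ℂ (EuclideanSpace.single e 1) (toEuclideanCLM (𝕜 := ℂ) X (EuclideanSpace.single e 1))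
      = X e e := by
  simp [EuclideanSpace.inner_single_left]

lemma norm_star_mul_mul_apply_le (h Z : Matrix n n ℂ) (e : n) :
    ‖(star h * Z * h) e e‖ ≤ ‖toEuclideanCLM (𝕜 := ℂ) Z‖ * ((star h * h) e e).re := by
  set T := toEuclideanCLM (𝕜 := ℂ) (n := n)
  set v := T h (EuclideanSpace.single e 1)
  have hstar : ∀ Y, (star h * Y) e e = inner ℂ v (T Y (EuclideanSpace.single e 1)) := fun Y => by
    rw [← inner_single_toEuclideanCLM_single (star h * Y), map_mul, map_star,
      ContinuousLinearMap.star_eq_adjoint, mul_apply_eq_comp,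
      ContinuousLinearMap.adjoint_inner_right]
  have hv : ((star h * h) e e).re = ‖v‖ ^ 2 := by
    rw [hstar, inner_self_eq_norm_sq_to_K]
    norm_cast
  rw [hv, mul_assoc, hstar, map_mul, mul_apply_eq_comp]
  calc ‖inner ℂ v (T Z v)‖ ≤ ‖v‖ * ‖T Z v‖ := norm_inner_le_norm _ _
    _ ≤ ‖v‖ * (‖T Z‖ * ‖v‖) := by gcongr; exact (T Z).le_opNorm v
    _ = ‖T Z‖ * ‖v‖ ^ 2 := by ring

theorem norm_apply_mul_le_of_tracial (A : StarSubalgebra ℂ (Matrix n n ℂ)) (e : n)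
    (htr : ∀ X ∈ A, ∀ Y ∈ A, (X * Y) e e = (Y * X) e e) {M Y : Matrix n n ℂ}
    (hM : M ∈ A) (hY : Y ∈ A) {c : ℝ} (hc : ‖toEuclideanCLM (𝕜 := ℂ) Y‖ ≤ c) :
    ‖(M * Y) e e‖ ≤ c * (cfc Real.sqrt (star M * M) e e).re := by
  have : IsClosed (A : Set (Matrix n n ℂ)) :=
    A.toSubalgebra.toSubmodule.closed_of_finiteDimensional
  set T := toEuclideanCLM (𝕜 := ℂ) (n := n)
  set a := star M * M
  have ha : a ∈ A := mul_mem (star_mem hM) hM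
  set h := cfc (fun t => √(√t)) a
  have hh : h ∈ A := cfc_mem _ ha
  have hsa : star h = h := (cfc_predicate (p := IsSelfAdjoint) _ a).star_eq
  have hsq : star h * h = cfc Real.sqrt a := by
    rw [hsa, ← cfc_mul']
    exact cfc_congr fun t _ => Real.mul_self_sqrt (Real.sqrt_nonneg t)
  have hV : polarPart M ∈ A := mul_mem hM (cfc_mem _ ha)
  have hτ : (M * Y) e e = (star h * (Y * polarPart M) * h) e e :=
    calc (M * Y) e e = (polarPart M * h * (h * Y)) e e := by
          conv_lhs => rw [← polarPart_mul_cfc_sqrt M, ← hsq, hsa]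
          simp only [mul_assoc]
      _ = (h * Y * (polarPart M * h)) e e := htr _ (mul_mem hV hh) _ (mul_mem hh hY)
      _ = (star h * (Y * polarPart M) * h) e e := by simp only [hsa, mul_assoc]
  have hS : 0 ≤ (cfc Real.sqrt a e e).re := by
    rw [← hsq]
    exact (Complex.nonneg_iff.mp ((posSemidef_conjTranspose_mul_self h).diag_nonneg (i := e))).1
  have hYV : ‖T (Y * polarPart M)‖ ≤ c := by
    rw [map_mul]
    refine (norm_mul_le _ _).trans ?_
    exact (mul_le_of_le_one_right (norm_nonneg _) (norm_toEuclideanCLM_polarPart_le_one M)).trans hc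
  calc ‖(M * Y) e e‖ ≤ ‖T (Y * polarPart M)‖ * (cfc Real.sqrt a e e).re := by
        rw [hτ, ← hsq]; exact norm_star_mul_mul_apply_le h _ e
    _ ≤ c * (cfc Real.sqrt a e e).re := by gcongr

end Matrix

lemma Matrix.mul_apply_comm_of_mem_span {ι n : Type*} [Fintype ι] [Fintype n]
    (L : ι → Matrix n n ℂ) (e : n) (hL : ∀ j l, (L j * L l) e e = (L l * L j) e e)
    {X Y : Matrix n n ℂ} (hX : X ∈ Submodule.span ℂ (Set.range L))
    (hY : Y ∈ Submodule.span ℂ (Set.range L)) :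
    (X * Y) e e = (Y * X) e e := by
  obtain ⟨a, rfl⟩ := (Submodule.mem_span_range_iff_exists_fun ℂ).mp hX
  obtain ⟨b, rfl⟩ := (Submodule.mem_span_range_iff_exists_fun ℂ).mp hY
  simp only [Finset.sum_mul, Finset.mul_sum, Matrix.sum_apply, smul_mul_smul_comm,
    Matrix.smul_apply, smul_eq_mul]
  rw [Finset.sum_comm]
  exact Finset.sum_congr rfl fun j _ => Finset.sum_congr rfl fun l _ => by rw [hL]; ring

section FusionRing

variable {ι : Type*}

def fusionMatrix (N : ι → ι → ι → ℕ) (j : ι) : Matrix ι ι ℂ :=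
  of fun s t => (N j t s : ℂ)

variable {N : ι → ι → ι → ℕ} {o : ι} {σ : ι → ι}

lemma star_fusionMatrix (hfrob : ∀ j k s, N j k s = N (σ j) s k) (j : ι) :
    star (fusionMatrix N j) = fusionMatrix N (σ j) := by
  ext a b
  simp [fusionMatrix, hfrob j a b]

lemma fusionMatrix_mul [Fintype ι]
    (hassoc : ∀ j k l s, ∑ t, N j k t * N t l s = ∑ t, N k l t * N j t s) (j l : ι) :
    fusionMatrix N j * fusionMatrix N l = ∑ s, (N j l s : ℂ) • fusionMatrix N s := by
  ext a b
  simp only [fusionMatrix, mul_apply, of_apply, Matrix.sum_apply, Matrix.smul_apply, smul_eq_mul]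
  exact_mod_cast (Finset.sum_congr rfl fun _ _ => mul_comm _ _).trans (hassoc j l b a).symm

variable [DecidableEq ι]

lemma fusionMatrix_unit (hunit : ∀ k s, N o k s = if k = s then 1 else 0) :
    fusionMatrix N o = 1 := by
  ext a b
  simp [fusionMatrix, hunit, one_apply, eq_comm]

variable [Fintype ι]

lemma fusionMatrix_mul_fusionMatrix_apply_unit
    (hunit' : ∀ j s, N j o s = if j = s then 1 else 0)
    (hdual : ∀ j k, N j k o = if j = σ k then 1 else 0) (j l : ι) :
    (fusionMatrix N j * fusionMatrix N l) o o = if j = σ l then 1 else 0 := by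
  simp [fusionMatrix, mul_apply, hunit', hdual]

lemma sum_smul_fusionMatrix_mul_apply_unit (hσ : ∀ j, σ (σ j) = j)
    (hunit' : ∀ j s, N j o s = if j = s then 1 else 0)
    (hdual : ∀ j k, N j k o = if j = σ k then 1 else 0) (c : ι → ℂ) (k : ι) :
    ((∑ j, c j • fusionMatrix N j) * fusionMatrix N (σ k)) o o = c k := by
  simp [Finset.sum_mul, Matrix.sum_apply, fusionMatrix_mul_fusionMatrix_apply_unit hunit' hdual, hσ]

lemma norm_toEuclideanCLM_fusionMatrix_le (hfrob : ∀ j k s, N j k s = N (σ j) s k)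
    {d : ι → ℝ} (hd : ∀ j, 0 < d j) (hdσ : ∀ j, d (σ j) = d j)
    (hdmul : ∀ j k, d j * d k = ∑ s, (N j k s : ℝ) * d s) (j : ι) :
    ‖toEuclideanCLM (𝕜 := ℂ) (fusionMatrix N j)‖ ≤ d j := by
  refine norm_toEuclideanCLM_le_of_schur _ hd (hd j).le (fun s => le_of_eq ?_) fun t => le_of_eq ?_
  · simp only [fusionMatrix, of_apply, Complex.norm_natCast, hfrob j _ s]
    rw [← hdmul, hdσ]
  · simp only [fusionMatrix, of_apply, Complex.norm_natCast]
    rw [← hdmul]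

def fusionAlgebra (hunit : ∀ k s, N o k s = if k = s then 1 else 0)
    (hassoc : ∀ j k l s, ∑ t, N j k t * N t l s = ∑ t, N k l t * N j t s)
    (hfrob : ∀ j k s, N j k s = N (σ j) s k) : StarSubalgebra ℂ (Matrix ι ι ℂ) :=
  { (Submodule.span ℂ (Set.range (fusionMatrix N))).toSubalgebra
      (fusionMatrix_unit hunit ▸ Submodule.subset_span ⟨o, rfl⟩) fun _ _ hX hY => by
        refine (Submodule.span_le.mpr ?_ : _ ≤ Submodule.span ℂ _) <|
          Submodule.span_mul_span ℂ (Set.range (fusionMatrix N)) _ ▸ Submodule.mul_mem_mul hX hY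
        rintro _ ⟨_, ⟨j, rfl⟩, _, ⟨l, rfl⟩, rfl⟩
        simp only [SetLike.mem_coe, fusionMatrix_mul hassoc]
        exact Submodule.sum_mem _ fun s _ => Submodule.smul_mem _ _ (Submodule.subset_span ⟨s, rfl⟩)
    with
    star_mem' := fun hX => by
      obtain ⟨a, rfl⟩ := (Submodule.mem_span_range_iff_exists_fun ℂ).mp hX
      simp only [star_sum, star_smul, star_fusionMatrix hfrob]
      exact Submodule.sum_mem _ fun j _ =>
        Submodule.smul_mem _ _ (Submodule.subset_span ⟨σ j, rfl⟩) }

variable {hunit : ∀ k s, N o k s = if k = s then 1 else 0}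
  {hassoc : ∀ j k l s, ∑ t, N j k t * N t l s = ∑ t, N k l t * N j t s}
  {hfrob : ∀ j k s, N j k s = N (σ j) s k}

lemma sum_smul_fusionMatrix_mem_fusionAlgebra (c : ι → ℂ) :
    ∑ j, c j • fusionMatrix N j ∈ fusionAlgebra hunit hassoc hfrob :=
  Submodule.sum_mem _ fun j _ => Submodule.smul_mem _ _ (Submodule.subset_span ⟨j, rfl⟩)

lemma fusionMatrix_mem_fusionAlgebra (j : ι) :
    fusionMatrix N j ∈ fusionAlgebra hunit hassoc hfrob :=
  Submodule.subset_span ⟨j, rfl⟩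

lemma fusionAlgebra_mul_apply_comm (hσ : ∀ j, σ (σ j) = j)
    (hunit' : ∀ j s, N j o s = if j = s then 1 else 0)
    (hdual : ∀ j k, N j k o = if j = σ k then 1 else 0) :
    ∀ X ∈ fusionAlgebra hunit hassoc hfrob, ∀ Y ∈ fusionAlgebra hunit hassoc hfrob,
      (X * Y) o o = (Y * X) o o := fun _ hX _ hY =>
  mul_apply_comm_of_mem_span _ o (fun j l => by
    have hswap : j = σ l ↔ l = σ j := ⟨fun h => h ▸ (hσ l).symm, fun h => h ▸ (hσ j).symm⟩
    simp only [fusionMatrix_mul_fusionMatrix_apply_unit hunit' hdual, hswap]) hX hY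

end FusionRing

theorem hausdorff_young_endpoint_general
    (m : ℕ) (hm : 0 < m)
    (N : Fin m → Fin m → Fin m → ℕ)
    (σ : Fin m → Fin m) (hσ : ∀ j, σ (σ j) = j)
    (hunit : ∀ k s, N ⟨0, hm⟩ k s = if k = s then 1 else 0)
    (hunit' : ∀ j s, N j ⟨0, hm⟩ s = if j = s then 1 else 0)
    (hdual : ∀ j k, N j k ⟨0, hm⟩ = if j = σ k then 1 else 0)
    (hassoc : ∀ j k l s, ∑ t, N j k t * N t l s = ∑ t, N k l t * N j t s)
    (hfrob : ∀ j k s, N j k s = N (σ j) s k)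
    (d : Fin m → ℝ) (hd1 : ∀ j, 1 ≤ d j) (hdσ : ∀ j, d (σ j) = d j)
    (hdmul : ∀ j k, d j * d k = ∑ s, (N j k s : ℝ) * d s)
    (lam : Fin m → ℂ)
    (M : Matrix (Fin m) (Fin m) ℂ)
    (hM : M = Matrix.of fun s k => ∑ j, lam j * (N j k s : ℂ)) :
    ∀ k, ‖lam k‖ / d k
      ≤ (((Matrix.posSemidef_conjTranspose_mul_self M).1.eigenvectorUnitary.1
          * Matrix.diagonal (((↑) : ℝ → ℂ) ∘ (√·) ∘ (Matrix.posSemidef_conjTranspose_mul_self M).1.eigenvalues)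
          * (star (Matrix.posSemidef_conjTranspose_mul_self M).1.eigenvectorUnitary : Matrix (Fin m) (Fin m) ℂ))
        ⟨0, hm⟩ ⟨0, hm⟩).re := by
  intro k
  have hd : ∀ j, 0 < d j := fun j => one_pos.trans_le (hd1 j)
  have hMsum : M = ∑ j, lam j • fusionMatrix N j := by
    ext s t
    simp [hM, fusionMatrix, Matrix.sum_apply]
  rw [IsHermitian.conj_diagonal_eq_cfc, div_le_iff₀ (hd k), mul_comm]
  calc ‖lam k‖ = ‖(M * fusionMatrix N (σ k)) ⟨0, hm⟩ ⟨0, hm⟩‖ := by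
        rw [hMsum, sum_smul_fusionMatrix_mul_apply_unit hσ hunit' hdual]
    _ ≤ d k * (cfc Real.sqrt (star M * M) ⟨0, hm⟩ ⟨0, hm⟩).re :=
        norm_apply_mul_le_of_tracial (fusionAlgebra hunit hassoc hfrob) _
          (fusionAlgebra_mul_apply_comm hσ hunit' hdual)
          (hMsum ▸ sum_smul_fusionMatrix_mem_fusionAlgebra lam) (fusionMatrix_mem_fusionAlgebra _)
          (hdσ k ▸ norm_toEuclideanCLM_fusionMatrix_le hfrob hd hdσ hdmul (σ k))

/-- Hausdorff–Young endpoint inequality: realize the fusion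
C*-algebra `B` by its left regular representation, so that `x = Σ_j λ_j x_j`
becomes the matrix `M` with `M_{s,k} = Σ_j λ_j N_{j,k}^s`, the trace `τ` is the
diagonal entry at the identity index, and `|x| = (x* x)^{1/2}` is the positive
square root `(Mᴴ M)^{1/2}`. Then `|λ_k| / d(x_k) ≤ τ(|x|)` for every `k`. -/
theorem hausdorff_young_endpoint
    (m : ℕ) (hm : 0 < m)
    (N : Fin m → Fin m → Fin m → ℕ)
    (σ : Fin m → Fin m) (hσ : ∀ j, σ (σ j) = j)
    (hunit : ∀ k s, N ⟨0, hm⟩ k s = if k = s then 1 else 0)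
    (hunit' : ∀ j s, N j ⟨0, hm⟩ s = if j = s then 1 else 0)
    (hdual : ∀ j k, N j k ⟨0, hm⟩ = if j = σ k then 1 else 0)
    (hassoc : ∀ j k l s, ∑ t, N j k t * N t l s = ∑ t, N k l t * N j t s)
    (hfrob : ∀ j k s, N j k s = N (σ j) s k)
    (hfrob' : ∀ j k s, N j k s = N s (σ k) j)
    (d : Fin m → ℝ) (hd1 : ∀ j, 1 ≤ d j) (hdσ : ∀ j, d (σ j) = d j)
    (hdmul : ∀ j k, d j * d k = ∑ s, (N j k s : ℝ) * d s)
    (lam : Fin m → ℂ)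
    (M : Matrix (Fin m) (Fin m) ℂ)
    (hM : M = Matrix.of fun s k => ∑ j, lam j * (N j k s : ℂ)) :
    ∀ k, ‖lam k‖ / d k
      ≤ (((Matrix.posSemidef_conjTranspose_mul_self M).1.eigenvectorUnitary.1
          * Matrix.diagonal (((↑) : ℝ → ℂ) ∘ (√·) ∘ (Matrix.posSemidef_conjTranspose_mul_self M).1.eigenvalues)
          * (star (Matrix.posSemidef_conjTranspose_mul_self M).1.eigenvectorUnitary : Matrix (Fin m) (Fin m) ℂ))
        ⟨0, hm⟩ ⟨0, hm⟩).re :=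
  hausdorff_young_endpoint_general m hm N σ hσ hunit hunit' hdual hassoc hfrob d hd1 hdσ hdmul lam M
    hM
end
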